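/- arXiv:1206.5197 — 4 statements merged into one kernel-verified Lean document; each statement's English description precedes it below -/
import Mathlib

section
/- Let (X, d) be a complete separable metric space and μ a Borel measure on X that is positive and finite on all balls and uniformly locally doubling, i.e. there are C < ∞ and R > 0 such that μ(B(x,2r)) ≤ C μ(B(x,r)) for all x ∈ X and 0 < r ≤ R. Assume moreover that there exist γ > 0 and r₀ > 0 such that μ(B(u,r) ∩ B(v,r)) ≥ γ μ(B(u,r)) whenever u, v ∈ X and r = d(u,v) ∈ (0, r₀). Let E ⊆ X be a measurable set with μ(E) < ∞, let (Y, d_Y) be a complete separable metric space, and let f : E → Y be a measurable mapping such that for every g ∈ E the approximate upper limit (with respect to μ-densities) ap limsup_{x→g} d_Y(f(x), f(g))/d(x,g) is finite. Then there is a sequence of pairwise disjoint measurable sets E₀, E₁, E₂, … with E = E₀ ∪ ⋃_{i≥1} E_i, μ(E₀) = 0, and such that every restriction f|_{E_i}, i ≥ 1, is a Lipschitz mapping. -/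
open MeasureTheory Metric Filter Set Function
open scoped Topology ENNReal NNReal

/-!
Fix `c > 0` with `c (1 + C) < γ`, and call `g ∈ E` good at level `(n, δ)` if in every ball
`B(g, r)` with `r < δ` the points outside `E` or with `d(f x, f g) > n d(x, g)` fill at most a
`c`-fraction of the measure. Since `E` has density one at almost every point of `E` (Lebesgue's
density theorem for doubling measures) and the approximate upper limit is finite, almost every
point of `E` is good at some level. If `g, g'` are good at level `(n, δ)` and `r = d(g, g') < δ`,
the overlap condition gives `μ(B(g, r) ∩ B(g', r)) ≥ γ μ(B(g, r))`, while the exceptional points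
of `g` and `g'` fill at most `c (1 + C) μ(B(g, r))` of it by doubling; a common non-exceptional
point `x ∈ E` then yields `d(f g, f g') ≤ 2 n r`. Cutting the good sets into pieces of diameter
`< δ` around a countable dense set and making the pieces disjoint gives the decomposition.
-/

/-- `Y` has density `d` at the point `x` with respect to the measure `μ`. -/
def HasDensityAt {X : Type*} [PseudoMetricSpace X] [MeasurableSpace X]
    (μ : Measure X) (Y : Set X) (x : X) (d : ℝ≥0∞) : Prop :=
  Tendsto (fun r : ℝ => μ (Y ∩ ball x r) / μ (ball x r)) (𝓝[>] (0 : ℝ)) (𝓝 d)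

theorem MeasureTheory.nonempty_inter_diff_union_of_measure_le {α : Type*} [MeasurableSpace α]
    {μ : Measure α} {U V S T : Set α} {c γ K : ℝ≥0∞} (hU₀ : μ U ≠ 0) (hU : μ U ≠ ⊤)
    (hc : c * (1 + K) < γ) (hUV : γ * μ U ≤ μ (U ∩ V)) (hVU : μ V ≤ K * μ U)
    (hS : μ (S ∩ U) ≤ c * μ U) (hT : μ (T ∩ V) ≤ c * μ V) : ((U ∩ V) \ (S ∪ T)).Nonempty := by
  by_contra h
  have hsub : U ∩ V ⊆ (S ∩ U) ∪ (T ∩ V) := fun x hx => by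
    by_contra hx'
    exact h ⟨x, hx, fun hST => hx' (hST.imp (⟨·, hx.1⟩) (⟨·, hx.2⟩))⟩
  have : μ (U ∩ V) < μ (U ∩ V) := calc
    μ (U ∩ V) ≤ μ (S ∩ U) + μ (T ∩ V) := (measure_mono hsub).trans (measure_union_le _ _)
    _ ≤ c * μ U + c * (K * μ U) := by gcongr; exact hT.trans (by gcongr)
    _ = c * (1 + K) * μ U := by ring
    _ < γ * μ U := ENNReal.mul_lt_mul_left hU₀ hU hc
    _ ≤ μ (U ∩ V) := hUV
  exact this.false

theorem LipschitzOnWith.inter_ball_of_dist_le {X Y : Type*} [PseudoMetricSpace X]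
    [PseudoMetricSpace Y] {f : X → Y} {s : Set X} {K : ℝ≥0} {δ : ℝ}
    (h : ∀ x ∈ s, ∀ y ∈ s, dist x y < δ → dist (f x) (f y) ≤ K * dist x y) (z : X) :
    LipschitzOnWith K f (s ∩ ball z (δ / 2)) :=
  LipschitzOnWith.of_dist_le_mul fun x hx y hy => h x hx.1 y hy.1 <| calc
    dist x y ≤ dist x z + dist y z := dist_triangle_right x y z
    _ < δ / 2 + δ / 2 := add_lt_add hx.2 hy.2
    _ = δ := add_halves δ

section Density

variable {X : Type*} [PseudoMetricSpace X] [MeasurableSpace X] {μ : Measure X}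
  {s t : Set X} {x : X}

theorem HasDensityAt.mono (hst : s ⊆ t) (ht : HasDensityAt μ t x 0) : HasDensityAt μ s x 0 :=
  tendsto_of_tendsto_of_tendsto_of_le_of_le tendsto_const_nhds ht (fun _ => zero_le)
    fun _ => ENNReal.div_le_div_right (measure_mono (inter_subset_inter_left _ hst)) _

theorem HasDensityAt.union (hs : HasDensityAt μ s x 0) (ht : HasDensityAt μ t x 0) :
    HasDensityAt μ (s ∪ t) x 0 := by
  refine tendsto_of_tendsto_of_tendsto_of_le_of_le tendsto_const_nhds
    (by simpa using hs.add ht) (fun _ => zero_le) fun r => ?_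
  rw [ENNReal.div_add_div_same, union_inter_distrib_right]
  exact ENNReal.div_le_div_right (measure_union_le _ _) _

theorem IsUnifLocDoublingMeasure.eventually_measure_closedBall_le_mul_ball
    [IsUnifLocDoublingMeasure μ] :
    ∀ᶠ r in 𝓝[>] 0, ∀ x, μ (closedBall x r) ≤ doublingConstant μ * μ (ball x r) := by
  filter_upwards [eventually_nhdsGT_zero_mul_left (half_pos one_pos)
    (eventually_measure_le_doublingConstant_mul μ), self_mem_nhdsWithin] with r hr hr₀ x
  calc μ (closedBall x r) = μ (closedBall x (2 * (1 / 2 * r))) := by ring_nf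
    _ ≤ doublingConstant μ * μ (closedBall x (1 / 2 * r)) := hr x
    _ ≤ doublingConstant μ * μ (ball x r) := by
      gcongr; exact closedBall_subset_ball (by linarith [mem_Ioi.1 hr₀])

theorem hasDensityAt_zero_of_tendsto_closedBall [IsUnifLocDoublingMeasure μ]
    (h : Tendsto (fun r : ℝ => μ (s ∩ closedBall x r) / μ (closedBall x r)) (𝓝[>] 0) (𝓝 0)) :
    HasDensityAt μ s x 0 := by
  set D := IsUnifLocDoublingMeasure.doublingConstant μ
  have hD : Tendsto (fun r : ℝ => (D : ℝ≥0∞) * (μ (s ∩ closedBall x r) / μ (closedBall x r)))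
      (𝓝[>] 0) (𝓝 0) := by
    simpa using ENNReal.Tendsto.const_mul h (Or.inr ENNReal.coe_ne_top)
  refine tendsto_of_tendsto_of_tendsto_of_le_of_le' tendsto_const_nhds hD
    (Eventually.of_forall fun _ => zero_le) ?_
  filter_upwards [IsUnifLocDoublingMeasure.eventually_measure_closedBall_le_mul_ball (μ := μ)]
    with r hr
  rcases eq_or_ne (μ (ball x r)) 0 with h₀ | h₀
  · simp [measure_mono_null inter_subset_right h₀]
  calc μ (s ∩ ball x r) / μ (ball x r)
      ≤ μ (s ∩ closedBall x r) / (μ (closedBall x r) / D) := by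
        gcongr
        · exact ball_subset_closedBall
        · exact ENNReal.div_le_of_le_mul' (hr x)
    _ = D * (μ (s ∩ closedBall x r) / μ (closedBall x r)) := by
        rw [← ENNReal.div_mul _ (Or.inl ((measure_mono_null ball_subset_closedBall).mt h₀))
          (Or.inr ENNReal.coe_ne_top), mul_comm]

theorem ae_hasDensityAt_compl [SecondCountableTopology X] [BorelSpace X]
    [IsLocallyFiniteMeasure μ] [IsUnifLocDoublingMeasure μ] (hs : MeasurableSet s) :
    ∀ᵐ x ∂μ, x ∈ s → HasDensityAt μ sᶜ x 0 := by
  let v := IsUnifLocDoublingMeasure.vitaliFamily μ 1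
  filter_upwards [v.ae_tendsto_measure_inter_div_of_measurableSet hs.compl] with x hx hxs
  refine hasDensityAt_zero_of_tendsto_closedBall ?_
  have := hx.comp (IsUnifLocDoublingMeasure.tendsto_closedBall_filterAt μ (fun _ => x) id
    tendsto_id (eventually_mem_nhdsWithin.mono fun r hr => by simpa using le_of_lt hr))
  simpa [hxs, Function.comp_def] using this

end Density

theorem IsUnifLocDoublingMeasure.of_measure_ball_two_mul_le {X : Type*} [PseudoMetricSpace X]
    [MeasurableSpace X] {μ : Measure X} {C : ℝ≥0∞} (hC : C ≠ ⊤) {R : ℝ} (hR : 0 < R)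
    (h : ∀ (x : X) (r : ℝ), 0 < r → r ≤ R → μ (ball x (2 * r)) ≤ C * μ (ball x r)) :
    IsUnifLocDoublingMeasure μ := by
  refine ⟨⟨C.toNNReal ^ 2, ?_⟩⟩
  filter_upwards [Ioc_mem_nhdsGT (half_pos hR)] with ε ⟨hε₀, hεR⟩ x
  calc μ (closedBall x (2 * ε)) ≤ μ (ball x (2 * (2 * ε))) :=
        measure_mono (closedBall_subset_ball (by linarith))
    _ ≤ C * (C * μ (ball x ε)) := by
        grw [h x (2 * ε) (by linarith) (by linarith), h x ε hε₀ (by linarith)]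
    _ ≤ C * (C * μ (closedBall x ε)) := by grw [ball_subset_closedBall]
    _ = (C.toNNReal ^ 2 : ℝ≥0) * μ (closedBall x ε) := by
        rw [ENNReal.coe_pow, ENNReal.coe_toNNReal hC, sq, mul_assoc]

theorem measure_inter_ball_le_of_forall_rat {X : Type*} [PseudoMetricSpace X]
    [MeasurableSpace X] {μ : Measure X} {S : Set X} {g : X} {δ : ℝ} {c : ℝ≥0∞}
    (h : ∀ q : ℚ, 0 < (q : ℝ) → (q : ℝ) < δ → μ (S ∩ ball g q) ≤ c * μ (ball g q))
    {r : ℝ} (hr : r < δ) : μ (S ∩ ball g r) ≤ c * μ (ball g r) := by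
  let ι := {q : ℚ // 0 < (q : ℝ) ∧ (q : ℝ) < r}
  have hball : ball g r = ⋃ q : ι, ball g (q : ℝ) := by
    ext x
    simp only [mem_iUnion, mem_ball]
    refine ⟨fun hx => ?_, fun ⟨q, hq⟩ => hq.trans q.2.2⟩
    obtain ⟨q, hxq, hqr⟩ := exists_rat_btwn hx
    exact ⟨⟨q, dist_nonneg.trans_lt hxq, hqr⟩, hxq⟩
  have hmono : Monotone fun q : ι => S ∩ ball g (q : ℝ) := fun q q' hqq' =>
    inter_subset_inter_right _ (ball_subset_ball (by exact_mod_cast hqq'))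
  rw [hball, inter_iUnion, hmono.measure_iUnion]
  exact iSup_le fun q => (h q q.2.1 (q.2.2.trans hr)).trans
    (by gcongr; exact subset_iUnion (fun q : ι => ball g (q : ℝ)) q)

theorem measurable_measure_preimage_inter_ball {X : Type*} [PseudoMetricSpace X]
    [SecondCountableTopology X] [MeasurableSpace X] [OpensMeasurableSpace X]
    {μ : Measure X} [SFinite μ] {S : Set (X × X)} (hS : MeasurableSet S) (r : ℝ) :
    Measurable fun g => μ (Prod.mk g ⁻¹' S ∩ ball g r) :=
  measurable_measure_prodMk_left
    (hS.inter (measurableSet_lt (measurable_snd.dist measurable_fst) measurable_const))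

namespace LipschitzDecomposition

variable {X Y : Type*} [MetricSpace X] [MetricSpace Y]

def badSet (E : Set X) (f : X → Y) (n : ℕ) (g : X) : Set X :=
  Eᶜ ∪ {x | n * dist x g < dist (f x) (f g)}

theorem badSet_congr {E : Set X} {f f' : X → Y} {n : ℕ} {g : X} (h : EqOn f f' E) (hg : g ∈ E) :
    badSet E f n g = badSet E f' n g := by
  ext x
  by_cases hx : x ∈ E
  · simp [badSet, hx, h hx, h hg]
  · simp [badSet, hx]

theorem badSet_subset {E : Set X} {f : X → Y} {n : ℕ} {g : X} {s : ℝ} (hsn : s ≤ n) :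
    badSet E f n g ⊆ Eᶜ ∪ {x ∈ E | s < dist (f x) (f g) / dist x g} := by
  rintro x (hx | hx)
  · exact Or.inl hx
  by_cases hxE : x ∈ E
  · have hxg : 0 < dist x g := by
      by_contra! h
      simp [dist_le_zero.1 h] at hx
    exact Or.inr ⟨hxE, hsn.trans_lt ((lt_div_iff₀ hxg).2 hx)⟩
  · exact Or.inl hxE

variable [MeasurableSpace X]

def goodSet (μ : Measure X) (E : Set X) (f : X → Y) (c : ℝ≥0∞) (n : ℕ) (δ : ℝ) : Set X :=
  {g ∈ E | ∀ r ∈ Ioo 0 δ, μ (badSet E f n g ∩ ball g r) ≤ c * μ (ball g r)}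

variable {μ : Measure X} {E : Set X} {f f' : X → Y} {c : ℝ≥0∞} {n : ℕ} {δ : ℝ} {g : X}

theorem goodSet_congr (h : EqOn f f' E) : goodSet μ E f c n δ = goodSet μ E f' c n δ := by
  ext g
  exact and_congr_right fun hg => by rw [badSet_congr h hg]

theorem goodSet_subset : goodSet μ E f c n δ ⊆ E := fun _ hg => hg.1

theorem goodSet_anti {δ' : ℝ} (h : δ' ≤ δ) : goodSet μ E f c n δ ⊆ goodSet μ E f c n δ' :=
  fun _ hg => ⟨hg.1, fun r hr => hg.2 r ⟨hr.1, hr.2.trans_le h⟩⟩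

theorem measurableSet_goodSet_of_measurable [SecondCountableTopology X] [OpensMeasurableSpace X]
    [SecondCountableTopology Y] [MeasurableSpace Y] [OpensMeasurableSpace Y] [SFinite μ]
    (hE : MeasurableSet E) (hf : Measurable f) : MeasurableSet (goodSet μ E f c n δ) := by
  have hbad : MeasurableSet {p : X × X | p.2 ∈ badSet E f n p.1} :=
    (measurable_snd hE.compl).union <| measurableSet_lt
      (measurable_const.mul (measurable_snd.dist measurable_fst))
      ((hf.comp measurable_snd).dist (hf.comp measurable_fst))
  have hball (q : ℚ) : Measurable fun g => μ (ball g q) := by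
    simpa using measurable_measure_preimage_inter_ball (μ := μ) MeasurableSet.univ q
  have hrat : goodSet μ E f c n δ = E ∩ ⋂ q ∈ {q : ℚ | 0 < (q : ℝ) ∧ (q : ℝ) < δ},
      {g | μ (badSet E f n g ∩ ball g q) ≤ c * μ (ball g q)} := by
    ext g
    simp only [goodSet, mem_inter_iff, mem_iInter, mem_ofPred_eq]
    exact and_congr_right fun _ => ⟨fun h q hq => h q hq, fun h r hr =>
      measure_inter_ball_le_of_forall_rat (fun q hq₀ hqδ => h q ⟨hq₀, hqδ⟩) hr.2⟩
  rw [hrat]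
  exact hE.inter <| .biInter (to_countable _) fun q _ =>
    measurableSet_le (measurable_measure_preimage_inter_ball hbad q) ((hball q).const_mul c)

theorem measurableSet_goodSet [SecondCountableTopology X] [OpensMeasurableSpace X]
    [SecondCountableTopology Y] [MeasurableSpace Y] [OpensMeasurableSpace Y] [SFinite μ]
    (hE : MeasurableSet E) (hf : Measurable fun x : E => f x) :
    MeasurableSet (goodSet μ E f c n δ) := by
  obtain ⟨f', hf', hff'⟩ :=
    (MeasurableEmbedding.subtype_coe hE).exists_measurable_extend hf fun x => ⟨f x⟩
  rw [goodSet_congr fun x hx => (congrFun hff' ⟨x, hx⟩).symm]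
  exact measurableSet_goodSet_of_measurable hE hf'

theorem lipschitzOnWith_goodSet_inter_ball {C γ : ℝ≥0∞} {R r₀ : ℝ}
    (hpos : ∀ (x : X) (r : ℝ), 0 < r → 0 < μ (ball x r))
    (hfin : ∀ (x : X) (r : ℝ), 0 < r → μ (ball x r) < ⊤)
    (hdoub : ∀ (x : X) (r : ℝ), 0 < r → r ≤ R → μ (ball x (2 * r)) ≤ C * μ (ball x r))
    (hover : ∀ u v : X, 0 < dist u v → dist u v < r₀ →
      γ * μ (ball u (dist u v)) ≤ μ (ball u (dist u v) ∩ ball v (dist u v)))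
    (hc : c * (1 + C) < γ) (hδR : δ ≤ R) (hδr₀ : δ ≤ r₀) (z : X) :
    LipschitzOnWith (2 * n) f (goodSet μ E f c n δ ∩ ball z (δ / 2)) := by
  refine LipschitzOnWith.inter_ball_of_dist_le (fun g hg g' hg' hgg' => ?_) z
  push_cast
  rcases eq_or_ne g g' with rfl | hne
  · simp
  set r := dist g g'
  have hr : 0 < r := dist_pos.2 hne
  have hball : ball g' r ⊆ ball g (2 * r) := fun y hy => by
    rw [mem_ball] at hy ⊢
    linarith [dist_triangle_right y g g']
  obtain ⟨x, ⟨hxg, hxg'⟩, hx⟩ := nonempty_inter_diff_union_of_measure_le (hpos g r hr).ne'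
    (hfin g r hr).ne hc (hover g g' hr (hgg'.trans_le hδr₀))
    ((measure_mono hball).trans (hdoub g r hr (hgg'.trans_le hδR).le))
    (hg.2 r ⟨hr, hgg'⟩) (hg'.2 r ⟨hr, hgg'⟩)
  simp only [badSet, mem_union, mem_compl_iff, mem_ofPred_eq, not_or, not_not, not_lt] at hx
  obtain ⟨⟨-, hfxg⟩, -, hfxg'⟩ := hx
  calc dist (f g) (f g') ≤ dist (f x) (f g) + dist (f x) (f g') := dist_triangle_left _ _ _
    _ ≤ n * dist x g + n * dist x g' := add_le_add hfxg hfxg'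
    _ ≤ n * r + n * r := by gcongr <;> [exact (mem_ball.1 hxg).le; exact (mem_ball.1 hxg').le]
    _ = 2 * n * r := by ring

theorem exists_pos_mem_goodSet (hc₀ : c ≠ 0) (hc : c ≠ ⊤) (hg : g ∈ E)
    (h : HasDensityAt μ (badSet E f n g) g 0) : ∃ δ > 0, g ∈ goodSet μ E f c n δ := by
  obtain ⟨δ, hδ, hδsub⟩ :=
    mem_nhdsGT_iff_exists_Ioo_subset.1 (h (Iio_mem_nhds (pos_iff_ne_zero.2 hc₀)))
  exact ⟨δ, hδ, hg, fun r hr =>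
    (ENNReal.div_le_iff_le_mul (Or.inr hc) (Or.inr hc₀)).1 (hδsub hr).le⟩

theorem ae_exists_mem_goodSet [SecondCountableTopology X] [BorelSpace X]
    [IsLocallyFiniteMeasure μ] [IsUnifLocDoublingMeasure μ] (hE : MeasurableSet E)
    (hc₀ : c ≠ 0) (hc : c ≠ ⊤) (hap : ∀ g ∈ E, ∃ s : ℝ,
      HasDensityAt μ {x ∈ E | s < dist (f x) (f g) / dist x g} g 0) :
    ∀ᵐ g ∂μ, g ∈ E → ∃ n : ℕ, ∃ δ > 0, g ∈ goodSet μ E f c n δ := by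
  filter_upwards [ae_hasDensityAt_compl hE] with g hgc hg
  obtain ⟨s, hs⟩ := hap g hg
  obtain ⟨n, hn⟩ := exists_nat_ge s
  exact ⟨n, exists_pos_mem_goodSet hc₀ hc hg (((hgc hg).union hs).mono (badSet_subset hn))⟩

end LipschitzDecomposition

theorem exists_lipschitz_decomposition_of_iUnion {X Y ι : Type*} [PseudoEMetricSpace X]
    [MeasurableSpace X] [PseudoEMetricSpace Y] [Countable ι] {μ : Measure X} {E : Set X}
    {f : X → Y} (hE : MeasurableSet E) (P : ι → Set X) (hPm : ∀ i, MeasurableSet (P i))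
    (hPE : ∀ i, P i ⊆ E) (hPf : ∀ i, ∃ K : ℝ≥0, LipschitzOnWith K f (P i))
    (hnull : μ (E \ ⋃ i, P i) = 0) :
    ∃ A : ℕ → Set X,
      Pairwise (Disjoint on A) ∧ (∀ i, MeasurableSet (A i)) ∧
      E = ⋃ i, A i ∧ μ (A 0) = 0 ∧
      ∀ i : ℕ, 1 ≤ i → ∃ C' : ℝ≥0, LipschitzOnWith C' f (A i) := by
  obtain ⟨Q, hQ⟩ : ∃ Q : ℕ → Set X, insert ∅ (range P) = range Q :=
    ((countable_range P).insert ∅).exists_eq_range (insert_nonempty _ _)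
  have hQgood (k : ℕ) : MeasurableSet (Q k) ∧ ∃ K : ℝ≥0, LipschitzOnWith K f (Q k) := by
    rcases (hQ ▸ mem_range_self k : Q k ∈ insert ∅ (range P)) with h | ⟨i, hi⟩
    · rw [h]; exact ⟨.empty, 0, lipschitzOnWith_empty _ _⟩
    · rw [← hi]; exact ⟨hPm i, hPf i⟩
  have hQP : ⋃ k, Q k = ⋃ i, P i := by
    rw [← sUnion_range, ← hQ, sUnion_insert, empty_union, sUnion_range]
  let B : ℕ → Set X := fun k => Nat.casesOn k (E \ ⋃ i, P i) Q
  refine ⟨disjointed B, disjoint_disjointed B, .disjointed fun k => ?_, ?_, ?_, fun i hi => ?_⟩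
  · cases k
    exacts [hE.diff (.iUnion hPm), (hQgood _).1]
  · rw [iUnion_disjointed, ← union_iUnion_nat_succ]
    change E = (E \ ⋃ i, P i) ∪ ⋃ k, Q k
    rw [hQP, sdiff_union_of_subset (iUnion_subset hPE)]
  · rwa [disjointed_zero]
  · obtain ⟨k, rfl⟩ := Nat.exists_eq_add_of_le' hi
    obtain ⟨K, hK⟩ := (hQgood k).2
    exact ⟨K, hK.mono (disjointed_subset B (k + 1))⟩

open LipschitzDecomposition in
theorem exists_countable_lipschitz_decomposition_metric_general {X Y : Type*}
    [MetricSpace X] [TopologicalSpace.SeparableSpace X]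
    [MeasurableSpace X] [BorelSpace X]
    [MetricSpace Y] [TopologicalSpace.SeparableSpace Y]
    [MeasurableSpace Y] [BorelSpace Y]
    (μ : Measure X)
    (hpos : ∀ (x : X) (r : ℝ), 0 < r → 0 < μ (ball x r))
    (hfin : ∀ (x : X) (r : ℝ), 0 < r → μ (ball x r) < ⊤)
    (C : ℝ≥0∞) (hC : C < ⊤) (R : ℝ) (hR : 0 < R)
    (hdoub : ∀ (x : X) (r : ℝ), 0 < r → r ≤ R → μ (ball x (2 * r)) ≤ C * μ (ball x r))
    (γ : ℝ≥0∞) (hγ : 0 < γ) (r₀ : ℝ) (hr₀ : 0 < r₀)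
    (hover : ∀ u v : X, 0 < dist u v → dist u v < r₀ →
      γ * μ (ball u (dist u v)) ≤ μ (ball u (dist u v) ∩ ball v (dist u v)))
    (E : Set X) (hE : MeasurableSet E)
    (f : X → Y) (hf : Measurable (fun x : E => f x))
    (hap : ∀ g ∈ E, ∃ s : ℝ,
      HasDensityAt μ {x ∈ E | s < dist (f x) (f g) / dist x g} g 0) :
    ∃ A : ℕ → Set X,
      Pairwise (Disjoint on A) ∧ (∀ i, MeasurableSet (A i)) ∧
      E = ⋃ i, A i ∧ μ (A 0) = 0 ∧
      ∀ i : ℕ, 1 ≤ i → ∃ C' : ℝ≥0, LipschitzOnWith C' f (A i) := by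
  have : SecondCountableTopology X := UniformSpace.secondCountable_of_separable X
  have : SecondCountableTopology Y := UniformSpace.secondCountable_of_separable Y
  have : IsLocallyFiniteMeasure μ :=
    ⟨fun x => ⟨ball x 1, ball_mem_nhds x one_pos, hfin x 1 one_pos⟩⟩
  have : IsUnifLocDoublingMeasure μ := .of_measure_ball_two_mul_le hC.ne hR hdoub
  obtain ⟨c, hc₀, hc⟩ :=
    ENNReal.exists_pos_mul_lt (ENNReal.add_ne_top.2 ⟨ENNReal.one_ne_top, hC.ne⟩) hγ.ne'
  have hc_top : c ≠ ⊤ := (ENNReal.lt_top_of_mul_ne_top_left hc.ne_top (by simp)).ne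
  obtain ⟨D, hDc, hD⟩ := TopologicalSpace.exists_countable_dense X
  have := hDc.to_subtype
  let δ : ℕ → ℝ := fun m => min (min r₀ R) (1 / (m + 1))
  have hδ₀ (m : ℕ) : 0 < δ m := lt_min (lt_min hr₀ hR) Nat.one_div_pos_of_nat
  let P : ℕ × ℕ × D → Set X := fun p =>
    goodSet μ E f c p.1 (δ p.2.1) ∩ ball p.2.2 (δ p.2.1 / 2)
  refine exists_lipschitz_decomposition_of_iUnion hE P
    (fun _ => (measurableSet_goodSet hE hf).inter measurableSet_ball)
    (fun _ => inter_subset_left.trans goodSet_subset)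
    (fun ⟨n, m, z⟩ => ⟨2 * n, lipschitzOnWith_goodSet_inter_ball hpos hfin hdoub hover hc
      ((min_le_left _ _).trans (min_le_right _ _)) ((min_le_left _ _).trans (min_le_left _ _)) z⟩)
    ?_
  refine ae_le_set.1 ?_
  filter_upwards [ae_exists_mem_goodSet hE hc₀.ne' hc_top hap] with g hg hgE
  obtain ⟨n, ε, hε, hgε⟩ := hg hgE
  obtain ⟨m, hm⟩ := exists_nat_one_div_lt hε
  obtain ⟨z, hz, hgz⟩ := hD.exists_dist_lt g (half_pos (hδ₀ m))
  exact mem_iUnion.2 ⟨(n, m, ⟨z, hz⟩), goodSet_anti ((min_le_right _ _).trans hm.le) hgε, hgz⟩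

/-- Lipschitz decomposition of a mapping with a.e. finite approximate dilatation on a
complete separable metric space with a uniformly locally doubling Borel measure that is
positive and finite on balls and satisfies a ball-overlap condition. -/
theorem exists_countable_lipschitz_decomposition_metric {X Y : Type*}
    [MetricSpace X] [CompleteSpace X] [TopologicalSpace.SeparableSpace X]
    [MeasurableSpace X] [BorelSpace X]
    [MetricSpace Y] [CompleteSpace Y] [TopologicalSpace.SeparableSpace Y]
    [MeasurableSpace Y] [BorelSpace Y]
    (μ : Measure X)
    (hpos : ∀ (x : X) (r : ℝ), 0 < r → 0 < μ (ball x r))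
    (hfin : ∀ (x : X) (r : ℝ), 0 < r → μ (ball x r) < ⊤)
    (C : ℝ≥0∞) (hC : C < ⊤) (R : ℝ) (hR : 0 < R)
    (hdoub : ∀ (x : X) (r : ℝ), 0 < r → r ≤ R → μ (ball x (2 * r)) ≤ C * μ (ball x r))
    (γ : ℝ≥0∞) (hγ : 0 < γ) (r₀ : ℝ) (hr₀ : 0 < r₀)
    (hover : ∀ u v : X, 0 < dist u v → dist u v < r₀ →
      γ * μ (ball u (dist u v)) ≤ μ (ball u (dist u v) ∩ ball v (dist u v)))
    (E : Set X) (hE : MeasurableSet E) (hEfin : μ E < ⊤)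
    (f : X → Y) (hf : Measurable (fun x : E => f x))
    (hap : ∀ g ∈ E, ∃ s : ℝ,
      HasDensityAt μ {x ∈ E | s < dist (f x) (f g) / dist x g} g 0) :
    ∃ A : ℕ → Set X,
      Pairwise (Disjoint on A) ∧ (∀ i, MeasurableSet (A i)) ∧
      E = ⋃ i, A i ∧ μ (A 0) = 0 ∧
      ∀ i : ℕ, 1 ≤ i → ∃ C' : ℝ≥0, LipschitzOnWith C' f (A i) :=
  exists_countable_lipschitz_decomposition_metric_general μ hpos hfin C hC R hR hdoub γ hγ r₀ hr₀
    hover E hE f hf hap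
end

section
/- Let E ⊆ ℝ^n be a Lebesgue-measurable set and f : E → ℝ^m a measurable mapping that is approximately differentiable at almost every point of E. Then there is a sequence of pairwise disjoint measurable sets Q₁, Q₂, … with λ(E \ ⋃_{i≥1} Q_i) = 0 such that every restriction f|_{Q_i} is a Lipschitz mapping. -/
open MeasureTheory Metric Filter Set Function
open scoped Topology ENNReal NNReal

/-- `L` is an approximate differential of `f` (as a map defined on `E`) at `a`. -/
def IsApproxDifferential {n m : ℕ} (E : Set (EuclideanSpace ℝ (Fin n)))
    (f : EuclideanSpace ℝ (Fin n) → EuclideanSpace ℝ (Fin m))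
    (a : EuclideanSpace ℝ (Fin n))
    (L : EuclideanSpace ℝ (Fin n) →ₗ[ℝ] EuclideanSpace ℝ (Fin m)) : Prop :=
  ∀ ε : ℝ, 0 < ε →
    HasDensityAt volume {x ∈ E | ε * ‖x - a‖ < ‖f x - f a - L (x - a)‖} a 0

open Module TopologicalSpace

/-!
Split `E`, up to a null set, according to a slope bound `K` and a scale `r₀`: keep the points `a`
such that, in every ball around `a` of radius at most `r₀`, all but a small fraction `δ` of the
points `x` satisfy `|f x - f a| ≤ K |x - a|`. Approximate differentiability together with
Lebesgue's density theorem puts almost every point of `E` in one of these sets. Two such points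
`x, y` at distance `d ≤ r₀ / 2` have a common good point `z` in the ball of radius `d / 2` around
their midpoint, since the exceptional sets cannot fill that ball; hence `|f x - f y| ≤ 2 K d`.
Cutting the pieces into balls of radius `r₀ / 4` and making them disjoint gives the decomposition.
-/

section Density

variable {X : Type*} [PseudoMetricSpace X] [MeasurableSpace X] {μ : Measure X} {Y Z : Set X}
  {x : X}

theorem HasDensityAt.mono_zero (hZ : HasDensityAt μ Z x 0) (hYZ : Y ⊆ Z) :
    HasDensityAt μ Y x 0 :=
  tendsto_of_tendsto_of_tendsto_of_le_of_le tendsto_const_nhds hZ (fun _ => zero_le)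
    fun _ => ENNReal.div_le_div_right (measure_mono (inter_subset_inter_left _ hYZ)) _

theorem HasDensityAt.union_zero (hY : HasDensityAt μ Y x 0) (hZ : HasDensityAt μ Z x 0) :
    HasDensityAt μ (Y ∪ Z) x 0 := by
  have hsum := hY.add hZ
  rw [add_zero] at hsum
  refine tendsto_of_tendsto_of_tendsto_of_le_of_le tendsto_const_nhds hsum (fun _ => zero_le)
    fun r => ?_
  rw [← ENNReal.add_div, union_inter_distrib_right]
  exact ENNReal.div_le_div_right (measure_union_le _ _) _

theorem HasDensityAt.eventually_measure_inter_ball_le (hY : HasDensityAt μ Y x 0) {δ : ℝ≥0∞}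
    (hδ : 0 < δ) (hδ' : δ ≠ ∞) : ∀ᶠ r in 𝓝[>] 0, μ (Y ∩ ball x r) ≤ δ * μ (ball x r) := by
  filter_upwards [hY.eventually (gt_mem_nhds hδ)] with r hr
  exact (ENNReal.div_le_iff_le_mul (Or.inr hδ') (Or.inr hδ.ne')).mp hr.le

end Density

theorem ae_hasDensityAt_compl_zero {V : Type*} [NormedAddCommGroup V] [NormedSpace ℝ V]
    [FiniteDimensional ℝ V] [MeasurableSpace V] [BorelSpace V] (μ : Measure V)
    [μ.IsAddHaarMeasure] {E : Set V} (hE : MeasurableSet E) :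
    ∀ᵐ a ∂μ, a ∈ E → HasDensityAt μ Eᶜ a 0 := by
  filter_upwards [Besicovitch.ae_tendsto_measure_inter_div_of_measurableSet μ hE.compl]
    with a ha haE
  rw [indicator_of_notMem (notMem_compl_iff.mpr haE)] at ha
  refine tendsto_of_tendsto_of_tendsto_of_le_of_le' tendsto_const_nhds ha
    (Eventually.of_forall fun _ => zero_le) ?_
  filter_upwards [self_mem_nhdsWithin] with r (hr : 0 < r)
  rw [Measure.addHaar_closedBall μ a hr.le, ← Measure.addHaar_ball_of_pos μ a hr]
  exact ENNReal.div_le_div_right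
    (measure_mono (inter_subset_inter_right _ ball_subset_closedBall)) _

theorem LipschitzOnWith.congr {X Y : Type*} [PseudoEMetricSpace X] [PseudoEMetricSpace Y]
    {f g : X → Y} {s : Set X} {K : ℝ≥0} (hf : LipschitzOnWith K f s) (hfg : EqOn f g s) :
    LipschitzOnWith K g s := fun x hx y hy => by
  rw [← hfg hx, ← hfg hy]
  exact hf hx hy

theorem iUnion_inter_ball_denseSeq {X : Type*} [PseudoMetricSpace X] [SeparableSpace X]
    [Nonempty X] (S : Set X) {r : ℝ} (hr : 0 < r) : ⋃ i, S ∩ ball (denseSeq X i) r = S := by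
  refine Subset.antisymm (iUnion_subset fun _ => inter_subset_left) fun a ha => ?_
  obtain ⟨i, hi⟩ := (denseRange_denseSeq X).exists_dist_lt a hr
  exact mem_iUnion.mpr ⟨i, ha, hi⟩

theorem nonempty_inter_of_measure_diff_add_lt {X : Type*} [MeasurableSpace X] {μ : Measure X}
    {S T U U' B : Set X} (hU : B ⊆ U) (hU' : B ⊆ U') (h : μ (U \ S) + μ (U' \ T) < μ B) :
    (S ∩ T ∩ B).Nonempty := by
  by_contra hempty
  refine h.not_ge ((measure_mono fun z hz => ?_).trans (measure_union_le _ _))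
  by_cases hS : z ∈ S
  · exact Or.inr ⟨hU' hz, fun hT => hempty ⟨z, ⟨hS, hT⟩, hz⟩⟩
  · exact Or.inl ⟨hU hz, hS⟩

theorem exists_pairwise_disjoint_lipschitzOnWith_of_countable {X Y ι : Type*} [MeasurableSpace X]
    [PseudoEMetricSpace X] [PseudoEMetricSpace Y] [Countable ι] [Nonempty ι] {f : X → Y}
    {P : ι → Set X} (hP : ∀ i, MeasurableSet (P i)) (hf : ∀ i, ∃ C, LipschitzOnWith C f (P i)) :
    ∃ Q : ℕ → Set X, Pairwise (Disjoint on Q) ∧ (∀ k, MeasurableSet (Q k)) ∧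
      ⋃ k, Q k = ⋃ i, P i ∧ ∀ k, ∃ C, LipschitzOnWith C f (Q k) := by
  obtain ⟨g, hg⟩ := exists_surjective_nat ι
  refine ⟨disjointed (P ∘ g), disjoint_disjointed _,
    MeasurableSet.disjointed fun k => hP (g k), ?_, fun k => ?_⟩
  · rw [iUnion_disjointed]
    exact hg.iUnion_comp P
  · obtain ⟨C, hC⟩ := hf (g k)
    exact ⟨C, hC.mono (disjointed_subset _ k)⟩

section BoundedSlope

variable {X Y : Type*} [PseudoMetricSpace X] [PseudoMetricSpace Y]

def boundedSlopeSet (E : Set X) (F : X → Y) (K : ℕ) (a : X) : Set X :=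
  {x ∈ E | dist (F x) (F a) ≤ K * dist x a}

/-- Radii are restricted to rationals so that the set is measurable. -/
def boundedSlopeDensitySet [MeasurableSpace X] (μ : Measure X) (E : Set X) (F : X → Y)
    (δ : ℝ≥0∞) (K : ℕ) (r₀ : ℝ) : Set X :=
  {a ∈ E | ∀ q : ℚ, 0 < (q : ℝ) → (q : ℝ) ≤ r₀ →
    μ (ball a q \ boundedSlopeSet E F K a) ≤ δ * μ (ball a q)}

theorem measurableSet_boundedSlopeDensitySet [MeasurableSpace X] [OpensMeasurableSpace X]
    [SecondCountableTopology X] [MeasurableSpace Y] [OpensMeasurableSpace Y]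
    [SecondCountableTopology Y] (μ : Measure X) [SFinite μ] {E : Set X} (hE : MeasurableSet E)
    {F : X → Y} (hF : Measurable F) (δ : ℝ≥0∞) (K : ℕ) (r₀ : ℝ) :
    MeasurableSet (boundedSlopeDensitySet μ E F δ K r₀) := by
  have hball : ∀ q : ℝ, MeasurableSet {p : X × X | dist p.2 p.1 < q} := fun q =>
    measurableSet_lt (measurable_snd.dist measurable_fst) measurable_const
  have hslope : MeasurableSet {p : X × X | p.2 ∈ boundedSlopeSet E F K p.1} :=
    (measurable_snd hE).inter <| measurableSet_le
      ((hF.comp measurable_snd).dist (hF.comp measurable_fst))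
      (measurable_const.mul (measurable_snd.dist measurable_fst))
  have hdiff : ∀ q : ℝ, Measurable fun a => μ (ball a q \ boundedSlopeSet E F K a) := fun q =>
    measurable_measure_prodMk_left ((hball q).diff hslope)
  have hmeas : ∀ q : ℝ, Measurable fun a => μ (ball a q) := fun q =>
    measurable_measure_prodMk_left (hball q)
  simp only [boundedSlopeDensitySet, ofPred_and, ofPred_mem_eq, ofPred_forall]
  exact hE.inter <| .iInter fun q => .iInter fun _ => .iInter fun _ =>
    measurableSet_le (hdiff q) ((hmeas q).const_mul δ)

end BoundedSlope

section Haar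

variable {V W : Type*} [NormedAddCommGroup V] [NormedSpace ℝ V] [FiniteDimensional ℝ V]
  [MeasurableSpace V] [BorelSpace V] (μ : Measure V) [μ.IsAddHaarMeasure]

theorem measure_ball_le_pow_mul_measure_ball (x c : V) {q s : ℝ} (hq : q ≤ 4 * s) :
    μ (ball x q) ≤ 4 ^ finrank ℝ V * μ (ball c s) := by
  calc μ (ball x q) ≤ μ (ball x (4 * s)) := measure_mono (ball_subset_ball hq)
    _ = 4 ^ finrank ℝ V * μ (ball c s) := by
      rw [Measure.addHaar_ball_mul_of_pos μ x (by norm_num) s, Measure.addHaar_ball_center μ c,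
        ENNReal.ofReal_pow (by norm_num), ENNReal.ofReal_ofNat]

variable [PseudoMetricSpace W] {E : Set V} {F : V → W} {δ : ℝ≥0∞} {K : ℕ} {r₀ : ℝ}

theorem dist_le_of_mem_boundedSlopeDensitySet (hδ : δ * (2 * 4 ^ finrank ℝ V) < 1) {x y : V}
    (hx : x ∈ boundedSlopeDensitySet μ E F δ K r₀) (hy : y ∈ boundedSlopeDensitySet μ E F δ K r₀)
    (hxy : 2 * dist x y ≤ r₀) : dist (F x) (F y) ≤ 2 * K * dist x y := by
  rcases eq_or_ne x y with rfl | hne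
  · simp
  set d := dist x y
  have hd : 0 < d := dist_pos.mpr hne
  obtain ⟨q, hdq, hq⟩ := exists_rat_btwn (by linarith : d < 2 * d)
  set c := midpoint ℝ x y
  have hcx : dist c x = d / 2 := by simp [c, d, dist_midpoint_left, div_eq_inv_mul]
  have hcy : dist c y = d / 2 := by simp [c, d, dist_midpoint_right, div_eq_inv_mul]
  have hsub : ∀ w, dist c w = d / 2 → ball c (d / 2) ⊆ ball w q := fun w hw =>
    ball_subset_ball' (by linarith)
  have hB : μ (ball c (d / 2)) ≠ 0 := (measure_ball_pos μ c (by positivity)).ne'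
  have hexc : μ (ball x q \ boundedSlopeSet E F K x) + μ (ball y q \ boundedSlopeSet E F K y)
      < μ (ball c (d / 2)) :=
    calc _ ≤ δ * μ (ball x q) + δ * μ (ball y q) :=
          add_le_add (hx.2 q (hd.trans hdq) (by linarith)) (hy.2 q (hd.trans hdq) (by linarith))
      _ ≤ δ * (4 ^ finrank ℝ V * μ (ball c (d / 2)))
            + δ * (4 ^ finrank ℝ V * μ (ball c (d / 2))) := by
          gcongr <;> exact measure_ball_le_pow_mul_measure_ball μ _ c (by linarith)
      _ = δ * (2 * 4 ^ finrank ℝ V) * μ (ball c (d / 2)) := by ring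
      _ < 1 * μ (ball c (d / 2)) := ENNReal.mul_lt_mul_left hB measure_ball_lt_top.ne hδ
      _ = μ (ball c (d / 2)) := one_mul _
  obtain ⟨z, ⟨⟨-, hzx⟩, ⟨-, hzy⟩⟩, hz⟩ :=
    nonempty_inter_of_measure_diff_add_lt (hsub x hcx) (hsub y hcy) hexc
  have hzx' : dist z x ≤ d := by linarith [dist_triangle z c x, mem_ball.mp hz]
  have hzy' : dist z y ≤ d := by linarith [dist_triangle z c y, mem_ball.mp hz]
  calc dist (F x) (F y) ≤ dist (F z) (F x) + dist (F z) (F y) := dist_triangle_left _ _ _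
    _ ≤ K * dist z x + K * dist z y := add_le_add hzx hzy
    _ ≤ K * d + K * d := by gcongr
    _ = 2 * K * d := by ring

theorem lipschitzOnWith_boundedSlopeDensitySet_inter_ball (hδ : δ * (2 * 4 ^ finrank ℝ V) < 1)
    (c : V) : LipschitzOnWith (2 * K) F (boundedSlopeDensitySet μ E F δ K r₀ ∩ ball c (r₀ / 4)) :=
  LipschitzOnWith.of_dist_le_mul fun x hx y hy => by
    have hxy : 2 * dist x y ≤ r₀ := by
      linarith [dist_triangle_right x y c, mem_ball.mp hx.2, mem_ball.mp hy.2]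
    exact_mod_cast dist_le_of_mem_boundedSlopeDensitySet μ hδ hx.1 hy.1 hxy

end Haar

theorem compl_boundedSlopeSet_subset {V W : Type*} [NormedAddCommGroup V] [NormedAddCommGroup W]
    [NormedSpace ℝ V] [NormedSpace ℝ W] {E : Set V} {F : V → W} {a : V} {L : V →L[ℝ] W} {K : ℕ}
    (hK : ‖L‖ + 1 ≤ K) :
    (boundedSlopeSet E F K a)ᶜ ⊆ {x ∈ E | 1 * ‖x - a‖ < ‖F x - F a - L (x - a)‖} ∪ Eᶜ := by
  intro x hx
  by_cases hxE : x ∈ E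
  · refine Or.inl ⟨hxE, ?_⟩
    have hslope : K * ‖x - a‖ < ‖F x - F a‖ := by
      simpa [boundedSlopeSet, hxE, dist_eq_norm] using hx
    calc 1 * ‖x - a‖ ≤ K * ‖x - a‖ - ‖L‖ * ‖x - a‖ := by nlinarith [norm_nonneg (x - a)]
      _ < ‖F x - F a‖ - ‖L (x - a)‖ := by linarith [L.le_opNorm (x - a)]
      _ ≤ ‖F x - F a - L (x - a)‖ := norm_sub_norm_le _ _
  · exact Or.inr hxE

section ApproxDifferential

variable {n m : ℕ} {E : Set (EuclideanSpace ℝ (Fin n))}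
  {f F : EuclideanSpace ℝ (Fin n) → EuclideanSpace ℝ (Fin m)} {a : EuclideanSpace ℝ (Fin n)}
  {L : EuclideanSpace ℝ (Fin n) →ₗ[ℝ] EuclideanSpace ℝ (Fin m)} {δ : ℝ≥0∞}

theorem IsApproxDifferential.congr (hf : IsApproxDifferential E f a L) (hfF : EqOn f F E)
    (ha : a ∈ E) : IsApproxDifferential E F a L := by
  intro ε hε
  convert hf ε hε using 3 with x
  exact ⟨fun ⟨hx, h⟩ => ⟨hx, by rwa [hfF hx, hfF ha]⟩,
    fun ⟨hx, h⟩ => ⟨hx, by rwa [← hfF hx, ← hfF ha]⟩⟩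

theorem IsApproxDifferential.exists_mem_boundedSlopeDensitySet
    (hL : IsApproxDifferential E F a L) (ha : a ∈ E) (hEc : HasDensityAt volume Eᶜ a 0)
    (hδ : 0 < δ) (hδ' : δ ≠ ∞) :
    ∃ K j : ℕ, a ∈ boundedSlopeDensitySet volume E F δ K (1 / (j + 1)) := by
  obtain ⟨K, hK⟩ := exists_nat_ge (‖LinearMap.toContinuousLinearMap L‖ + 1)
  have hbad : HasDensityAt volume (boundedSlopeSet E F K a)ᶜ a 0 :=
    ((hL 1 one_pos).union_zero hEc).mono_zero (by simpa using compl_boundedSlopeSet_subset hK)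
  obtain ⟨r₀, hr₀, hsmall⟩ :=
    mem_nhdsGT_iff_exists_Ioo_subset.mp (hbad.eventually_measure_inter_ball_le hδ hδ')
  obtain ⟨j, hj⟩ := exists_nat_one_div_lt (mem_Ioi.mp hr₀)
  refine ⟨K, j, ha, fun q hq hqj => ?_⟩
  rw [sdiff_eq, inter_comm]
  exact hsmall ⟨hq, hqj.trans_lt hj⟩

theorem measure_diff_iUnion_boundedSlopeDensitySet (hE : MeasurableSet E)
    (hap : ∀ᵐ a ∂volume, a ∈ E →
      ∃ L : EuclideanSpace ℝ (Fin n) →ₗ[ℝ] EuclideanSpace ℝ (Fin m), IsApproxDifferential E F a L)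
    (hδ : 0 < δ) (hδ' : δ ≠ ∞) :
    volume (E \ ⋃ p : ℕ × ℕ, boundedSlopeDensitySet volume E F δ p.1 (1 / (p.2 + 1))) = 0 := by
  refine ae_le_set.mp ?_
  filter_upwards [hap, ae_hasDensityAt_compl_zero volume hE] with a hL hEc haE
  obtain ⟨L, hL⟩ := hL haE
  obtain ⟨K, j, ha⟩ := hL.exists_mem_boundedSlopeDensitySet haE (hEc haE) hδ hδ'
  exact mem_iUnion.mpr ⟨(K, j), ha⟩

end ApproxDifferential

/-- A measurable mapping that is approximately differentiable a.e. in `E` decomposes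
`E`, up to a null set, into countably many disjoint measurable sets on each of which
it is Lipschitz. -/
theorem lipschitz_decomposition_of_approx_differentiable {n m : ℕ}
    (E : Set (EuclideanSpace ℝ (Fin n))) (hE : MeasurableSet E)
    (f : EuclideanSpace ℝ (Fin n) → EuclideanSpace ℝ (Fin m))
    (hf : Measurable (fun x : E => f x))
    (hap : ∀ᵐ a ∂volume, a ∈ E →
      ∃ L : EuclideanSpace ℝ (Fin n) →ₗ[ℝ] EuclideanSpace ℝ (Fin m),
        IsApproxDifferential E f a L) :
    ∃ Q : ℕ → Set (EuclideanSpace ℝ (Fin n)),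
      Pairwise (Disjoint on Q) ∧ (∀ i, MeasurableSet (Q i)) ∧
      volume (E \ ⋃ i, Q i) = 0 ∧
      ∀ i : ℕ, ∃ C : ℝ≥0, LipschitzOnWith C f (Q i) := by
  obtain ⟨F, hFm, hFf⟩ : ∃ F, Measurable F ∧ EqOn F f E := by
    obtain ⟨F, hFm, hFeq⟩ :=
      (MeasurableEmbedding.subtype_coe hE).exists_measurable_extend hf fun _ => ⟨0⟩
    exact ⟨F, hFm, fun x hx => congrFun hFeq ⟨x, hx⟩⟩
  obtain ⟨δ, hδ0, hδ⟩ := ENNReal.exists_nnreal_pos_mul_lt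
    (a := 2 * 4 ^ finrank ℝ (EuclideanSpace ℝ (Fin n))) (by finiteness) one_ne_zero
  have hnull := measure_diff_iUnion_boundedSlopeDensitySet hE
    (hap.mono fun a h ha => (h ha).imp fun _ hL => hL.congr hFf.symm ha)
    (ENNReal.coe_pos.mpr hδ0) ENNReal.coe_ne_top
  obtain ⟨Q, hdisj, hmeas, hQ, hlip⟩ :=
    exists_pairwise_disjoint_lipschitzOnWith_of_countable (f := f)
      (P := fun p : (ℕ × ℕ) × ℕ => boundedSlopeDensitySet volume E F δ p.1.1 (1 / (p.1.2 + 1))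
        ∩ ball (denseSeq _ p.2) (1 / (p.1.2 + 1) / 4))
      (fun _ => (measurableSet_boundedSlopeDensitySet volume hE hFm _ _ _).inter measurableSet_ball)
      fun _ => ⟨_, (lipschitzOnWith_boundedSlopeDensitySet_inter_ball volume hδ _).congr
        fun _ hx => hFf hx.1.1⟩
  have hcover :
      ⋃ k, Q k = ⋃ p : ℕ × ℕ, boundedSlopeDensitySet volume E F δ p.1 (1 / (p.2 + 1)) := by
    simp only [hQ, iUnion_prod']
    exact iUnion₂_congr fun _ _ =>
      iUnion_inter_ball_denseSeq _ (div_pos Nat.one_div_pos_of_nat four_pos)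
  exact ⟨Q, hdisj, hmeas, hcover ▸ hnull, hlip⟩
end

section
/- Let P ⊆ ℝ^n be a bounded Lebesgue-measurable set and f : P → ℝ^m a measurable mapping. Suppose that for every ε > 0 there exist a closed set Q ⊆ P with λ(P \ Q) < ε and a C¹-smooth mapping g : ℝ^n → ℝ^m such that g = f on Q. Then f is approximately differentiable at almost every point of P. -/
/-!
Take closed sets `Q k` with `λ(P \ Q k) < 1 / (k + 1)` on which `f` agrees with a `C¹` map `g k`.
Almost every point of `P` lies in some `Q k` and is a Lebesgue density point of it. At such a
point `a` the complement of `Q k` has density zero, and near `a` every point of `Q k` satisfies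
`‖f x - f a - Dg_k(a) (x - a)‖ ≤ ε ‖x - a‖`, so `Dg_k(a)` is an approximate differential of `f`.
-/

open MeasureTheory Metric Filter Set Function
open scoped Topology ENNReal NNReal

namespace HasDensityAt

variable {X : Type*} [PseudoMetricSpace X] [MeasurableSpace X] {μ : Measure X} {s t : Set X}
  {x : X}

theorem mono_zero_s13 (ht : HasDensityAt μ t x 0) (hst : ∀ᶠ y in 𝓝 x, y ∈ s → y ∈ t) :
    HasDensityAt μ s x 0 := by
  obtain ⟨δ, hδ, hδst⟩ := Metric.eventually_nhds_iff_ball.1 hst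
  refine tendsto_of_tendsto_of_tendsto_of_le_of_le' tendsto_const_nhds ht
    (Eventually.of_forall fun r => zero_le) ?_
  filter_upwards [Ioo_mem_nhdsGT hδ] with r hr
  refine ENNReal.div_le_div_right (measure_mono fun y (hy : y ∈ s ∩ ball x r) => ?_) _
  exact ⟨hδst y (ball_subset_ball hr.2.le hy.2) hy.1, hy.2⟩

theorem compl_of_one [IsLocallyFiniteMeasure μ] (hs : MeasurableSet s)
    (h : HasDensityAt μ s x 1) : HasDensityAt μ sᶜ x 0 := by
  have hfin : ∀ᶠ r in 𝓝[>] (0 : ℝ), μ (ball x r) < ∞ := by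
    filter_upwards [((tendsto_closedBall_smallSets x).mono_left nhdsWithin_le_nhds).eventually
      (μ.finiteAt_nhds x).eventually] with r hr
    exact (measure_mono ball_subset_closedBall).trans_lt hr
  have hone_sub :
      Tendsto (fun r => 1 - μ (s ∩ ball x r) / μ (ball x r)) (𝓝[>] (0 : ℝ)) (𝓝 0) := by
    simpa using ENNReal.Tendsto.sub tendsto_const_nhds h (Or.inl ENNReal.one_ne_top)
  refine tendsto_of_tendsto_of_tendsto_of_le_of_le' tendsto_const_nhds hone_sub
    (Eventually.of_forall fun r => zero_le) ?_
  filter_upwards [hfin] with r hr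
  have hcompl : μ (sᶜ ∩ ball x r) = μ (ball x r) - μ (s ∩ ball x r) := by
    rw [← sdiff_eq_compl_inter, inter_comm s]
    exact ENNReal.eq_sub_of_add_eq ((measure_mono inter_subset_left).trans_lt hr).ne
      (measure_sdiff_add_inter _ hs)
  calc μ (sᶜ ∩ ball x r) / μ (ball x r)
      = μ (ball x r) / μ (ball x r) - μ (s ∩ ball x r) / μ (ball x r) := by
        rw [hcompl, ENNReal.sub_div fun _ hlt => (pos_of_gt hlt).ne']
    _ ≤ 1 - μ (s ∩ ball x r) / μ (ball x r) := tsub_le_tsub_right ENNReal.div_self_le_one _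

end HasDensityAt

section LebesgueDensity

variable {E : Type*} [NormedAddCommGroup E] [NormedSpace ℝ E] [FiniteDimensional ℝ E]
  [MeasurableSpace E] [BorelSpace E] (μ : Measure E) [μ.IsAddHaarMeasure]

theorem MeasureTheory.Measure.addHaar_closedBall_ae_eq_ball (x : E) {r : ℝ} (hr : r ≠ 0) :
    closedBall x r =ᵐ[μ] ball x r :=
  ae_eq_set.2 ⟨by rw [closedBall_sdiff_ball, Measure.addHaar_sphere_of_ne_zero μ x hr],
    by rw [sdiff_eq_empty.2 ball_subset_closedBall, measure_empty]⟩

theorem ae_hasDensityAt_one {s : Set E} (hs : MeasurableSet s) :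
    ∀ᵐ x ∂μ, x ∈ s → HasDensityAt μ s x 1 := by
  filter_upwards [Besicovitch.ae_tendsto_measure_inter_div_of_measurableSet μ hs] with x hx hxs
  rw [indicator_of_mem hxs] at hx
  refine hx.congr' ?_
  filter_upwards [self_mem_nhdsWithin] with r hr
  have hball := Measure.addHaar_closedBall_ae_eq_ball μ x (ne_of_gt hr)
  rw [measure_congr hball, measure_congr ((ae_eq_refl s).inter hball)]

end LebesgueDensity

theorem isApproxDifferential_of_hasFDerivAt_of_eqOn {n m : ℕ}
    {P Q : Set (EuclideanSpace ℝ (Fin n))}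
    {f g : EuclideanSpace ℝ (Fin n) → EuclideanSpace ℝ (Fin m)}
    {L : EuclideanSpace ℝ (Fin n) →L[ℝ] EuclideanSpace ℝ (Fin m)} {a : EuclideanSpace ℝ (Fin n)}
    (hg : HasFDerivAt g L a) (hgf : EqOn g f Q) (ha : a ∈ Q) (hQ : HasDensityAt volume Qᶜ a 0) :
    IsApproxDifferential P f a L := by
  intro ε hε
  refine hQ.mono_zero_s13 ?_
  filter_upwards [hg.isLittleO.def hε] with y hy ⟨_, hbad⟩ hyQ
  rw [hgf hyQ, hgf ha] at hy
  exact hbad.not_ge hy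

theorem exists_seq_measure_sdiff_iUnion_eq_zero {α : Type*} [MeasurableSpace α] {μ : Measure α}
    {P : Set α} {p : Set α → Prop}
    (h : ∀ ε : ℝ, 0 < ε → ∃ Q, p Q ∧ μ (P \ Q) < ENNReal.ofReal ε) :
    ∃ Q : ℕ → Set α, (∀ k, p (Q k)) ∧ μ (P \ ⋃ k, Q k) = 0 := by
  choose Q hp hlt using fun k : ℕ => h (1 / (k + 1)) Nat.one_div_pos_of_nat
  refine ⟨Q, hp, nonpos_iff_eq_zero.1 (ge_of_tendsto' (x := atTop) ?_ fun k =>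
    (measure_mono (sdiff_subset_sdiff_right (subset_iUnion Q k))).trans (hlt k).le)⟩
  simpa using ENNReal.tendsto_ofReal tendsto_one_div_add_atTop_nhds_zero_nat

theorem approx_differentiable_of_C1_extensions_general {n m : ℕ}
    (P : Set (EuclideanSpace ℝ (Fin n)))
    (f : EuclideanSpace ℝ (Fin n) → EuclideanSpace ℝ (Fin m))
    (hext : ∀ ε : ℝ, 0 < ε →
      ∃ Q : Set (EuclideanSpace ℝ (Fin n)), IsClosed Q ∧ Q ⊆ P ∧
        volume (P \ Q) < ENNReal.ofReal ε ∧
        ∃ g : EuclideanSpace ℝ (Fin n) → EuclideanSpace ℝ (Fin m),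
          ContDiff ℝ 1 g ∧ EqOn g f Q) :
    ∀ᵐ a ∂volume, a ∈ P →
      ∃ L : EuclideanSpace ℝ (Fin n) →ₗ[ℝ] EuclideanSpace ℝ (Fin m),
        IsApproxDifferential P f a L := by
  obtain ⟨Q, hQ, hPQ⟩ := exists_seq_measure_sdiff_iUnion_eq_zero (μ := volume)
    (p := fun Q => IsClosed Q ∧ ∃ g, ContDiff ℝ 1 g ∧ EqOn g f Q) fun ε hε =>
      let ⟨Q, hQc, _, hlt, hg⟩ := hext ε hε
      ⟨Q, ⟨hQc, hg⟩, hlt⟩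
  have hdens : ∀ k, ∀ᵐ a ∂volume, a ∈ Q k → HasDensityAt volume (Q k)ᶜ a 0 := fun k =>
    (ae_hasDensityAt_one volume (hQ k).1.measurableSet).mono fun _ h ha =>
      (h ha).compl_of_one (hQ k).1.measurableSet
  filter_upwards [measure_eq_zero_iff_ae_notMem.1 hPQ, ae_all_iff.2 hdens] with a haPQ hadens haP
  obtain ⟨k, hak⟩ := mem_iUnion.1 (not_not.1 fun h => haPQ ⟨haP, h⟩)
  obtain ⟨g, hg, hgf⟩ := (hQ k).2
  exact ⟨_, isApproxDifferential_of_hasFDerivAt_of_eqOn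
    ((hg.differentiable one_ne_zero a).hasFDerivAt) hgf hak (hadens k hak)⟩

/-- If a bounded measurable map coincides with `C¹`-smooth maps outside sets of
arbitrarily small measure, then it is approximately differentiable a.e. -/
theorem approx_differentiable_of_C1_extensions {n m : ℕ}
    (P : Set (EuclideanSpace ℝ (Fin n))) (hP : MeasurableSet P)
    (hPb : Bornology.IsBounded P)
    (f : EuclideanSpace ℝ (Fin n) → EuclideanSpace ℝ (Fin m))
    (hf : Measurable (fun x : P => f x))
    (hext : ∀ ε : ℝ, 0 < ε →
      ∃ Q : Set (EuclideanSpace ℝ (Fin n)), IsClosed Q ∧ Q ⊆ P ∧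
        volume (P \ Q) < ENNReal.ofReal ε ∧
        ∃ g : EuclideanSpace ℝ (Fin n) → EuclideanSpace ℝ (Fin m),
          ContDiff ℝ 1 g ∧ EqOn g f Q) :
    ∀ᵐ a ∂volume, a ∈ P →
      ∃ L : EuclideanSpace ℝ (Fin n) →ₗ[ℝ] EuclideanSpace ℝ (Fin m),
        IsApproxDifferential P f a L :=
  approx_differentiable_of_C1_extensions_general P f hext
end

section
/- Let E ⊆ ℝ^n be a Lebesgue-measurable set and f : E → ℝ^n a measurable mapping that is approximately differentiable at almost every point of E. Then there exist a set Σ ⊆ E with λ(Σ) = 0 and a measurable map L from E to the n × n real matrices such that L(x) is an approximate differential of f at every x ∈ E \ Σ, and for every measurable function u : ℝ^n → [0, ∞] the area formula holds: ∫_E u(x) |det L(x)| dλ(x) = ∫_{ℝ^n} ( ∑_{x ∈ f⁻¹(y) ∩ (E \ Σ)} u(x) ) dλ(y). -/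
open MeasureTheory Metric Filter Set Function
open scoped Topology ENNReal NNReal

/-!
At almost every point `a` of `E`, the points `x` with `‖f x - f a‖ > M ‖x - a‖` have density zero
once `M` exceeds the norm of the approximate differential. Two nearby points with this property at
a fixed scale share a neighbour at which both estimates hold, so `f` is Lipschitz on each of
countably many such sets and `E` is covered, up to a null set, by the coincidence sets of `f` with
countably many Lipschitz maps `g k`. Rademacher's theorem and Lebesgue's density theorem refine
these into disjoint measurable pieces on which `g k` is differentiable and which have density one
at each of their points; there the derivative of `g k` is an approximate differential of `f`.
The area formula holds on each piece by the change of variables formula on the injective parts and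
the nullity of the image of the critical set, and it adds up over the countable partition.
-/

open Module

section Density

variable {X : Type*} [PseudoMetricSpace X] [MeasurableSpace X] {μ : Measure X} {S T : Set X}
  {a : X}

lemma hasDensityAt_zero_of_measure_eq_zero (h : μ S = 0) : HasDensityAt μ S a 0 := by
  simp only [HasDensityAt, measure_mono_null inter_subset_left h, ENNReal.zero_div]
  exact tendsto_const_nhds

lemma HasDensityAt.zero_of_inter_subset (hT : HasDensityAt μ T a 0) {U : Set X} (hU : U ∈ 𝓝 a)
    (hST : S ∩ U ⊆ T) : HasDensityAt μ S a 0 := by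
  obtain ⟨ρ, hρ, hρU⟩ := Metric.mem_nhds_iff.1 hU
  refine tendsto_of_tendsto_of_tendsto_of_le_of_le' tendsto_const_nhds hT
    (Eventually.of_forall fun _ => zero_le) ?_
  filter_upwards [Ioo_mem_nhdsGT hρ] with r hr
  exact ENNReal.div_le_div_right (measure_mono fun x (hx : x ∈ S ∩ ball a r) =>
    (⟨hST ⟨hx.1, hρU (ball_subset_ball hr.2.le hx.2)⟩, hx.2⟩ : x ∈ T ∩ ball a r)) _

lemma HasDensityAt.zero_mono (hT : HasDensityAt μ T a 0) (hST : S ⊆ T) :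
    HasDensityAt μ S a 0 :=
  hT.zero_of_inter_subset univ_mem (inter_subset_left.trans hST)

lemma HasDensityAt.zero_union (hS : HasDensityAt μ S a 0) (hT : HasDensityAt μ T a 0) :
    HasDensityAt μ (S ∪ T) a 0 := by
  refine tendsto_of_tendsto_of_tendsto_of_le_of_le tendsto_const_nhds
    (by simpa using hS.add hT) (fun _ => zero_le) fun r => ?_
  rw [union_inter_distrib_right, ENNReal.div_add_div_same]
  gcongr
  exact measure_union_le _ _

end Density

section AddHaar

variable {E : Type*} [NormedAddCommGroup E] [NormedSpace ℝ E] [FiniteDimensional ℝ E]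
  [MeasurableSpace E] {μ : Measure E} [μ.IsAddHaarMeasure]

lemma HasDensityAt.exists_measure_inter_ball_le {T : Set E} {a : E} (hT : HasDensityAt μ T a 0)
    {δ : ℝ≥0∞} (hδ : 0 < δ) :
    ∃ ρ > 0, ∀ r ∈ Ioo 0 ρ, μ (T ∩ ball a r) ≤ δ * μ (ball a r) := by
  have hev : ∀ᶠ r in 𝓝[>] (0 : ℝ), 0 < r → μ (T ∩ ball a r) ≤ δ * μ (ball a r) := by
    filter_upwards [hT.eventually_lt_const hδ] with r hr hr0
    exact (ENNReal.div_le_iff_le_mul (Or.inl (measure_ball_pos μ a hr0).ne')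
      (Or.inl measure_ball_lt_top.ne)).1 hr.le
  obtain ⟨ρ, hρ, hρsub⟩ := mem_nhdsGT_iff_exists_Ioo_subset.1 hev
  exact ⟨ρ, hρ, fun r hr => hρsub hr hr.1⟩

variable [BorelSpace E]

lemma hasDensityAt_iff_tendsto_closedBall {S : Set E} {a : E} {d : ℝ≥0∞} :
    HasDensityAt μ S a d ↔
      Tendsto (fun r => μ (S ∩ closedBall a r) / μ (closedBall a r)) (𝓝[>] 0) (𝓝 d) := by
  refine tendsto_congr' ?_
  filter_upwards [self_mem_nhdsWithin] with r (hr : 0 < r)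
  have h : ball a r =ᵐ[μ] closedBall a r := ae_eq_set.2
    ⟨by simp [sdiff_eq_empty.2 ball_subset_closedBall],
      by rw [closedBall_sdiff_ball, Measure.addHaar_sphere_of_ne_zero μ a hr.ne']⟩
  rw [measure_congr h, measure_congr ((ae_eq_refl S).inter h)]

lemma ae_hasDensityAt_compl_zero_s14 {s : Set E} (hs : MeasurableSet s) :
    ∀ᵐ x ∂μ, x ∈ s → HasDensityAt μ sᶜ x 0 := by
  filter_upwards [Besicovitch.ae_tendsto_measure_inter_div_of_measurableSet μ hs.compl]
    with x hx hxs
  rw [hasDensityAt_iff_tendsto_closedBall]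
  simpa [hxs] using hx

lemma MeasurableSet.exists_subset_forall_hasDensityAt_compl_zero {s : Set E}
    (hs : MeasurableSet s) :
    ∃ t ⊆ s, MeasurableSet t ∧ μ (s \ t) = 0 ∧ ∀ x ∈ t, HasDensityAt μ tᶜ x 0 := by
  set N := toMeasurable μ {x | x ∈ s ∧ ¬HasDensityAt μ sᶜ x 0}
  have hN : μ N = 0 := by
    have h := ae_hasDensityAt_compl_zero_s14 (μ := μ) hs
    rw [ae_iff] at h
    simpa only [N, measure_toMeasurable, Classical.not_imp] using h
  refine ⟨s \ N, sdiff_subset, hs.diff (measurableSet_toMeasurable _ _),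
    measure_mono_null (fun x ⟨hxs, hx⟩ => by_contra fun h => hx ⟨hxs, h⟩) hN, ?_⟩
  rintro x ⟨hxs, hxN⟩
  have hx : HasDensityAt μ sᶜ x 0 := by
    by_contra h
    exact hxN (subset_toMeasurable _ _ ⟨hxs, h⟩)
  rw [Set.compl_sdiff]
  exact (hasDensityAt_zero_of_measure_eq_zero hN).zero_union hx

end AddHaar

def lipschitzDensitySet {X Y : Type*} [PseudoMetricSpace X] [MeasurableSpace X]
    [PseudoMetricSpace Y] (μ : Measure X) (f : X → Y) (M : ℝ≥0) (δ : ℝ≥0∞) (ρ : ℝ) : Set X :=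
  {a | ∀ r ∈ Ioo 0 ρ, μ ({x | M * dist x a < dist (f x) (f a)} ∩ ball a r) ≤ δ * μ (ball a r)}

section LipschitzDensity

variable {E : Type*} [NormedAddCommGroup E] [NormedSpace ℝ E] [FiniteDimensional ℝ E]
  [MeasurableSpace E] [BorelSpace E] {μ : Measure E} [μ.IsAddHaarMeasure]

lemma addHaar_ball_two_mul (a b : E) (r : ℝ) :
    μ (ball a (2 * r)) = 2 ^ finrank ℝ E * μ (ball b r) := by
  rw [Measure.addHaar_ball_mul_of_pos μ a two_pos, Measure.addHaar_ball_center μ b,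
    ENNReal.ofReal_pow zero_le_two, ENNReal.ofReal_ofNat]

variable {Y : Type*} [PseudoMetricSpace Y]

/-- Two points of a `lipschitzDensitySet` are compared through a third point `x` near both at
which neither of them sees `f` grow too fast; such an `x` exists because the two exceptional sets
together fill at most half of `ball b (dist a b)`, the factor `2 ^ finrank ℝ E` paying for the
passage from `ball a (2 * dist a b)` to `ball b (dist a b)`. -/
lemma dist_le_of_mem_lipschitzDensitySet {f : E → Y} {M : ℝ≥0} {ρ : ℝ} {a b : E}
    (ha : a ∈ lipschitzDensitySet μ f M (4 * 2 ^ finrank ℝ E)⁻¹ ρ)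
    (hb : b ∈ lipschitzDensitySet μ f M (4 * 2 ^ finrank ℝ E)⁻¹ ρ) (hab : dist a b < ρ / 2) :
    dist (f a) (f b) ≤ 3 * M * dist a b := by
  rcases eq_or_ne a b with rfl | hne
  · simp
  set r := dist a b
  have hr : 0 < r := dist_pos.2 hne
  set T : E → Set E := fun c => {x | M * dist x c < dist (f x) (f c)}
  have h2d : (2 : ℝ≥0∞) ^ finrank ℝ E ≠ 0 := pow_ne_zero _ two_ne_zero
  have hδ : (4 * 2 ^ finrank ℝ E : ℝ≥0∞)⁻¹ * 2 ^ finrank ℝ E = 4⁻¹ := by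
    rw [ENNReal.mul_inv (by simp) (by simp), mul_assoc,
      ENNReal.inv_mul_cancel h2d (by simp), mul_one]
  have hTa : μ (T a ∩ ball b r) ≤ 4⁻¹ * μ (ball b r) := calc
    μ (T a ∩ ball b r) ≤ μ (T a ∩ ball a (2 * r)) :=
      measure_mono (inter_subset_inter_right _ (ball_subset_ball' (by rw [dist_comm]; linarith)))
    _ ≤ (4 * 2 ^ finrank ℝ E)⁻¹ * μ (ball a (2 * r)) := ha (2 * r) ⟨by positivity, by linarith⟩
    _ = 4⁻¹ * μ (ball b r) := by rw [addHaar_ball_two_mul a b r, ← mul_assoc, hδ]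
  have hTb : μ (T b ∩ ball b r) ≤ 4⁻¹ * μ (ball b r) := by
    refine (hb r ⟨hr, by linarith⟩).trans (mul_le_mul_left ?_ _)
    exact ENNReal.inv_le_inv.2 (le_mul_of_one_le_right' (one_le_pow₀ one_le_two))
  obtain ⟨x, hxr, hxa, hxb⟩ : ∃ x ∈ ball b r, x ∉ T a ∧ x ∉ T b := by
    by_contra! h
    have hle : μ (ball b r) ≤ μ (ball b r) / 2 := calc
      μ (ball b r) ≤ μ (T a ∩ ball b r ∪ T b ∩ ball b r) :=
        measure_mono fun x hx => by by_cases hxa : x ∈ T a <;> simp_all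
      _ ≤ 4⁻¹ * μ (ball b r) + 4⁻¹ * μ (ball b r) :=
        (measure_union_le _ _).trans (add_le_add hTa hTb)
      _ = μ (ball b r) / 2 := by
        rw [← add_mul, ENNReal.div_eq_inv_mul, show (4 : ℝ≥0∞) = 2 * 2 by norm_num,
          ENNReal.mul_inv (by simp) (by simp), ← mul_add, ENNReal.inv_two_add_inv_two, mul_one]
    exact hle.not_gt (ENNReal.half_lt_self (measure_ball_pos μ b hr).ne' measure_ball_lt_top.ne)
  simp only [T, mem_ofPred_eq, not_lt] at hxa hxb
  calc dist (f a) (f b) ≤ dist (f x) (f a) + dist (f x) (f b) := dist_triangle_left _ _ _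
    _ ≤ M * (2 * r) + M * r := by
      gcongr
      · exact hxa.trans (by gcongr; linarith [dist_triangle x b a, mem_ball.1 hxr, dist_comm a b])
      · exact hxb.trans (by gcongr; exact (mem_ball.1 hxr).le)
    _ = 3 * M * r := by ring

lemma lipschitzOnWith_lipschitzDensitySet_inter_ball (f : E → Y) (M : ℝ≥0) (ρ : ℝ) (q : E) :
    LipschitzOnWith (3 * M) f
      (lipschitzDensitySet μ f M (4 * 2 ^ finrank ℝ E)⁻¹ ρ ∩ ball q (ρ / 4)) := by
  refine LipschitzOnWith.of_dist_le_mul fun a ha b hb => ?_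
  have hab : dist a b < ρ / 2 := by
    linarith [dist_triangle_right a b q, mem_ball.1 ha.2, mem_ball.1 hb.2]
  simpa using dist_le_of_mem_lipschitzDensitySet ha.1 hb.1 hab

variable {F : Type*} [NormedAddCommGroup F] [NormedSpace ℝ F] [FiniteDimensional ℝ F]

lemma exists_seq_lipschitzWith_of_ae_mem_lipschitzDensitySet {s : Set E} {f : E → F}
    (h : ∀ᵐ a ∂μ, a ∈ s → ∃ M j : ℕ,
      a ∈ lipschitzDensitySet μ f M (4 * 2 ^ finrank ℝ E)⁻¹ (1 / (j + 1))) :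
    ∃ g : ℕ → E → F, (∀ k, ∃ K, LipschitzWith K (g k)) ∧ ∀ᵐ a ∂μ, a ∈ s → ∃ k, f a = g k a := by
  obtain ⟨u, hu⟩ := TopologicalSpace.exists_dense_seq E
  have hext : ∀ i : ℕ × ℕ × ℕ, ∃ g : E → F, (∃ K, LipschitzWith K g) ∧
      EqOn f g (lipschitzDensitySet μ f i.1 (4 * 2 ^ finrank ℝ E)⁻¹ (1 / (i.2.1 + 1)) ∩
        ball (u i.2.2) (1 / (i.2.1 + 1) / 4)) := fun i =>
    let ⟨g, hg, hfg⟩ :=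
      (lipschitzOnWith_lipschitzDensitySet_inter_ball f _ _ _).extend_finite_dimension
    ⟨g, ⟨_, hg⟩, hfg⟩
  choose g hg hfg using hext
  obtain ⟨e, he⟩ := exists_surjective_nat (ℕ × ℕ × ℕ)
  refine ⟨g ∘ e, fun k => hg (e k), ?_⟩
  filter_upwards [h] with a ha has
  obtain ⟨M, j, haM⟩ := ha has
  obtain ⟨i, hi⟩ := hu.exists_dist_lt a (by positivity : (0 : ℝ) < 1 / (j + 1) / 4)
  obtain ⟨k, hk⟩ := he (M, j, i)
  exact ⟨k, by rw [comp_apply, hk]; exact hfg _ ⟨haM, mem_ball.2 hi⟩⟩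

end LipschitzDensity

section ApproxDifferential

variable {n m : ℕ}

lemma ae_exists_mem_lipschitzDensitySet {s : Set (EuclideanSpace ℝ (Fin n))}
    (hs : MeasurableSet s) {f : EuclideanSpace ℝ (Fin n) → EuclideanSpace ℝ (Fin m)}
    (hap : ∀ᵐ a ∂volume, a ∈ s → ∃ L, IsApproxDifferential s f a L) {δ : ℝ≥0∞} (hδ : 0 < δ) :
    ∀ᵐ a ∂volume, a ∈ s → ∃ M j : ℕ, a ∈ lipschitzDensitySet volume f M δ (1 / (j + 1)) := by
  filter_upwards [hap, ae_hasDensityAt_compl_zero_s14 hs] with a hL hsc has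
  obtain ⟨L, hL⟩ := hL has
  obtain ⟨M, hM⟩ := exists_nat_gt (‖LinearMap.toContinuousLinearMap L‖ + 1)
  have hT : HasDensityAt volume {x | (M : ℝ≥0) * dist x a < dist (f x) (f a)} a 0 := by
    refine ((hsc has).zero_union (hL 1 one_pos)).zero_mono fun x hx => ?_
    by_cases hxs : x ∈ s
    · refine Or.inr ⟨hxs, ?_⟩
      have hLx := (LinearMap.toContinuousLinearMap L).le_opNorm (x - a)
      have hfx := norm_sub_norm_le (f x - f a) (L (x - a))
      simp only [mem_ofPred_eq, NNReal.coe_natCast, dist_eq_norm] at hx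
      simp only [LinearMap.coe_toContinuousLinearMap'] at hLx
      nlinarith [norm_nonneg (x - a)]
    · exact Or.inl hxs
  obtain ⟨ρ, hρ, hρT⟩ := hT.exists_measure_inter_ball_le hδ
  obtain ⟨j, hj⟩ := exists_nat_one_div_lt hρ
  exact ⟨M, j, fun r hr => hρT r ⟨hr.1, hr.2.trans hj⟩⟩

lemma isApproxDifferential_of_eqOn_of_hasFDerivAt {s t : Set (EuclideanSpace ℝ (Fin n))}
    {f g : EuclideanSpace ℝ (Fin n) → EuclideanSpace ℝ (Fin m)} {a : EuclideanSpace ℝ (Fin n)}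
    {D : EuclideanSpace ℝ (Fin n) →L[ℝ] EuclideanSpace ℝ (Fin m)} (hfg : EqOn f g t) (ha : a ∈ t)
    (hg : HasFDerivAt g D a) (ht : HasDensityAt volume tᶜ a 0) :
    IsApproxDifferential s f a D := by
  intro ε hε
  refine ht.zero_of_inter_subset (hg.isLittleO.def hε) fun x ⟨hx, hxg⟩ hxt => ?_
  rw [mem_ofPred_eq, hfg hxt, hfg ha] at hx
  exact hx.2.not_ge (by simpa using hxg)

end ApproxDifferential

section Pieces

variable {E F : Type*} [NormedAddCommGroup E] [NormedSpace ℝ E] [FiniteDimensional ℝ E]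
  [MeasurableSpace E] [BorelSpace E] {μ : Measure E} [μ.IsAddHaarMeasure]
  [NormedAddCommGroup F] [NormedSpace ℝ F] [FiniteDimensional ℝ F] [MeasurableSpace F]
  [BorelSpace F]

lemma exists_pieces_of_ae_exists_eq_lipschitzWith {s : Set E} (hs : MeasurableSet s) {f : E → F}
    (hf : Measurable fun x : s => f x) {g : ℕ → E → F} (hg : ∀ k, ∃ K, LipschitzWith K (g k))
    (hfg : ∀ᵐ a ∂μ, a ∈ s → ∃ k, f a = g k a) :
    ∃ C : ℕ → Set E, (∀ k, MeasurableSet (C k)) ∧ Pairwise (Disjoint on C) ∧ (∀ k, C k ⊆ s) ∧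
      μ (s \ ⋃ k, C k) = 0 ∧ (∀ k, EqOn f (g k) (C k)) ∧
      ∀ k, ∀ x ∈ C k, DifferentiableAt ℝ (g k) x ∧ HasDensityAt μ (C k)ᶜ x 0 := by
  set A : ℕ → Set E := fun k =>
    Subtype.val '' {z : s | f z = g k z} ∩ {x | DifferentiableAt ℝ (g k) x}
  have hA : ∀ k, MeasurableSet (A k) := fun k =>
    (hs.subtype_image (measurableSet_eq_fun hf
      ((hg k).choose_spec.continuous.measurable.comp measurable_subtype_coe))).inter
      (measurableSet_of_differentiableAt ℝ (g k))
  have hA_sub : ∀ k, A k ⊆ s := fun k x ⟨⟨z, _, hz⟩, _⟩ => hz ▸ z.2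
  have hA_null : μ (s \ ⋃ k, A k) = 0 := by
    have hdiff : ∀ᵐ x ∂μ, ∀ k, DifferentiableAt ℝ (g k) x :=
      ae_all_iff.2 fun k => (hg k).choose_spec.ae_differentiableAt
    rw [measure_eq_zero_iff_ae_notMem]
    filter_upwards [hfg, hdiff] with x hfx hdx ⟨hxs, hxA⟩
    obtain ⟨k, hk⟩ := hfx hxs
    exact hxA (mem_iUnion.2 ⟨k, ⟨⟨x, hxs⟩, hk, rfl⟩, hdx k⟩)
  choose C hC_sub hC hC_null hC_dens using fun k =>
    (MeasurableSet.disjointed hA k).exists_subset_forall_hasDensityAt_compl_zero (μ := μ)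
  have hCA : ∀ k, C k ⊆ A k := fun k => (hC_sub k).trans (disjointed_subset A k)
  refine ⟨C, hC, (disjoint_disjointed A).mono fun i j h => h.mono (hC_sub i) (hC_sub j),
    fun k => (hCA k).trans (hA_sub k), ?_, fun k x hx => ?_, fun k x hx => ?_⟩
  · refine measure_mono_null (fun x ⟨hxs, hxC⟩ => ?_)
      (measure_union_null hA_null (measure_iUnion_null hC_null))
    by_cases hxA : x ∈ ⋃ k, A k
    · rw [← iUnion_disjointed] at hxA
      obtain ⟨k, hk⟩ := mem_iUnion.1 hxA
      exact Or.inr (mem_iUnion.2 ⟨k, hk, fun h => hxC (mem_iUnion.2 ⟨k, h⟩)⟩)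
    · exact Or.inl ⟨hxs, hxA⟩
  · obtain ⟨⟨z, hz, rfl⟩, -⟩ := hCA k hx
    exact hz
  · exact ⟨(hCA k hx).2, hC_dens k x hx⟩

end Pieces

lemma ENNReal.tsum_iUnion_of_pairwise_disjoint {α ι : Type*} {t : ι → Set α}
    (ht : Pairwise (Disjoint on t)) (u : α → ℝ≥0∞) :
    ∑' x : ↥(⋃ i, t i), u x = ∑' i, ∑' x : ↥(t i), u x := by
  rw [← (unionEqSigmaOfDisjoint ht).symm.tsum_eq, ENNReal.tsum_sigma']
  rfl

lemma tsum_preimage_inter_eq_zero {α β : Type*} {f : α → β} {s : Set α} {y : β}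
    (hy : y ∉ f '' s) (u : α → ℝ≥0∞) : ∑' x : ↥(f ⁻¹' {y} ∩ s), u x = 0 := by
  rw [eq_empty_of_forall_notMem fun x (hx : x ∈ f ⁻¹' {y} ∩ s) => hy ⟨x, hx.2, hx.1⟩,
    tsum_empty]

lemma Set.InjOn.tsum_preimage_inter_eq_extend {α β : Type*} {f : α → β} {s : Set α}
    (hf : InjOn f s) (u : α → ℝ≥0∞) :
    (fun y => ∑' x : ↥(f ⁻¹' {y} ∩ s), u x) = extend (s.domRestrict f) (fun x => u x) 0 := by
  funext y
  by_cases hy : y ∈ f '' s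
  · obtain ⟨x, hxs, rfl⟩ := hy
    have hx : f ⁻¹' {f x} ∩ s = {x} :=
      ext fun z => ⟨fun ⟨hz, hzs⟩ => hf hzs hxs hz, by rintro rfl; exact ⟨rfl, hxs⟩⟩
    rw [hx, tsum_singleton]
    exact ((injOn_iff_injective.1 hf).extend_apply (fun x : s => u x) 0 ⟨x, hxs⟩).symm
  · rw [tsum_preimage_inter_eq_zero hy, extend_apply']
    · rfl
    · exact fun ⟨⟨x, hxs⟩, hx⟩ => hy ⟨x, hxs, hx⟩

/-- The area formula for `f` on `s` with Jacobian `J`, bundled with the measurability of the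
multiplicity function that makes it additive over countable partitions of `s`. -/
def AreaFormulaOn {X : Type*} [MeasurableSpace X] (μ : Measure X) (f : X → X) (J : X → ℝ≥0∞)
    (s : Set X) : Prop :=
  ∀ u : X → ℝ≥0∞, Measurable u →
    AEMeasurable (fun y => ∑' x : ↥(f ⁻¹' {y} ∩ s), u x) μ ∧
      ∫⁻ x in s, u x * J x ∂μ = ∫⁻ y, ∑' x : ↥(f ⁻¹' {y} ∩ s), u x ∂μ

namespace AreaFormulaOn

section Measure

variable {X : Type*} [MeasurableSpace X] {μ : Measure X} {f : X → X} {J : X → ℝ≥0∞}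

lemma congr {J' : X → ℝ≥0∞} {s : Set X} (h : AreaFormulaOn μ f J s) (hs : MeasurableSet s)
    (hJ : EqOn J J' s) : AreaFormulaOn μ f J' s := fun u hu =>
  ⟨(h u hu).1, by rw [← (h u hu).2]; exact setLIntegral_congr_fun hs fun x hx => by rw [hJ hx]⟩

lemma iUnion {ι : Type*} [Countable ι] {s : ι → Set X} (hs : ∀ i, MeasurableSet (s i))
    (hd : Pairwise (Disjoint on s)) (h : ∀ i, AreaFormulaOn μ f J (s i)) :
    AreaFormulaOn μ f J (⋃ i, s i) := by
  intro u hu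
  have hsum : (fun y => ∑' x : ↥(f ⁻¹' {y} ∩ ⋃ i, s i), u x)
      = fun y => ∑' i, ∑' x : ↥(f ⁻¹' {y} ∩ s i), u x := by
    funext y
    rw [inter_iUnion, ENNReal.tsum_iUnion_of_pairwise_disjoint
      fun i j hij => (hd hij).mono inter_subset_right inter_subset_right]
  rw [hsum, lintegral_iUnion hs hd, lintegral_tsum fun i => (h i u hu).1]
  exact ⟨AEMeasurable.tsum fun i => (h i u hu).1, tsum_congr fun i => (h i u hu).2⟩

lemma union {s t : Set X} (h : AreaFormulaOn μ f J s) (h' : AreaFormulaOn μ f J t)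
    (hs : MeasurableSet s) (ht : MeasurableSet t) (hd : Disjoint s t) :
    AreaFormulaOn μ f J (s ∪ t) := by
  rw [union_eq_iUnion]
  exact iUnion (Bool.forall_bool.2 ⟨ht, hs⟩) (pairwise_disjoint_on_bool.2 hd)
    (Bool.forall_bool.2 ⟨h', h⟩)

end Measure

variable {E : Type*} [NormedAddCommGroup E] [NormedSpace ℝ E] [FiniteDimensional ℝ E]
  [MeasurableSpace E] [BorelSpace E] {μ : Measure E} [μ.IsAddHaarMeasure] {f : E → E}
  {f' : E → E →L[ℝ] E} {s : Set E}

lemma of_injOn (hs : MeasurableSet s) (hf' : ∀ x ∈ s, HasFDerivWithinAt f (f' x) s x)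
    (hf : InjOn f s) : AreaFormulaOn μ f (fun x => ENNReal.ofReal |(f' x).det|) s := by
  intro u hu
  have hext := (injOn_iff_injective.1 hf).extend_apply (fun x : s => u x) 0
  rw [hf.tsum_preimage_inter_eq_extend]
  refine ⟨((measurableEmbedding_of_fderivWithin hs hf' hf).measurable_extend
    (hu.comp measurable_subtype_coe) measurable_const).aemeasurable, ?_⟩
  have hsupp : support (extend (s.domRestrict f) (fun x : s => u x) 0) ⊆ f '' s := by
    intro y hy
    by_contra h
    exact hy (extend_apply' _ _ _ fun ⟨⟨x, hxs⟩, hx⟩ => h ⟨x, hxs, hx⟩)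
  rw [← setLIntegral_eq_of_support_subset hsupp,
    lintegral_image_eq_lintegral_abs_det_fderiv_mul μ hs hf' hf]
  exact setLIntegral_congr_fun hs fun x hx => by
    rw [mul_comm]
    exact congrArg _ (hext ⟨x, hx⟩).symm

lemma of_det_eq_zero (hs : MeasurableSet s) (hf' : ∀ x ∈ s, HasFDerivWithinAt f (f' x) s x)
    (hdet : ∀ x ∈ s, (f' x).det = 0) :
    AreaFormulaOn μ f (fun x => ENNReal.ofReal |(f' x).det|) s := by
  intro u _
  have hzero : (fun y => ∑' x : ↥(f ⁻¹' {y} ∩ s), u x) =ᵐ[μ] 0 := by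
    filter_upwards [measure_eq_zero_iff_ae_notMem.1
      (addHaar_image_eq_zero_of_det_fderivWithin_eq_zero μ hf' hdet)] with y hy
    exact tsum_preimage_inter_eq_zero hy u
  refine ⟨aemeasurable_zero.congr hzero.symm, ?_⟩
  rw [lintegral_congr_ae hzero, setLIntegral_congr_fun hs (g := 0) fun x hx => by simp [hdet x hx]]
  simp

end AreaFormulaOn

lemma ContinuousLinearMap.exists_ne_zero_injOn_of_approximatesLinearOn {E : Type*}
    [NormedAddCommGroup E] [NormedSpace ℝ E] [FiniteDimensional ℝ E] (A : E →L[ℝ] E)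
    (hA : A.det ≠ 0) :
    ∃ r : ℝ≥0, r ≠ 0 ∧ ∀ (f : E → E) (t : Set E), ApproximatesLinearOn f A t r → InjOn f t := by
  set B := A.toContinuousLinearEquivOfDetNeZero hA
  have hB : (B : E →L[ℝ] E) = A := A.coe_toContinuousLinearEquivOfDetNeZero hA
  rcases B.subsingleton_or_nnnorm_symm_pos with h | h
  · exact ⟨1, one_ne_zero, fun f t _ => injOn_of_subsingleton f t⟩
  · refine ⟨‖(B.symm : E →L[ℝ] E)‖₊⁻¹ / 2, (half_pos (inv_pos.2 h)).ne', fun f t hf => ?_⟩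
    rw [← hB] at hf
    exact hf.injOn (Or.inr (NNReal.half_lt_self (inv_pos.2 h).ne'))

namespace AreaFormulaOn

variable {E : Type*} [NormedAddCommGroup E] [NormedSpace ℝ E] [FiniteDimensional ℝ E]
  [MeasurableSpace E] [BorelSpace E] {μ : Measure E} [μ.IsAddHaarMeasure] {f : E → E}
  {f' : E → E →L[ℝ] E} {s : Set E}

/-- The area formula on a measurable set where `f` is differentiable: the critical set has a null
image, and the rest is cut into countably many pieces on which `f` is close enough to an
invertible linear map to be injective. -/
theorem of_hasFDerivWithinAt (hs : MeasurableSet s)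
    (hf' : ∀ x ∈ s, HasFDerivWithinAt f (f' x) s x) (hf'_meas : Measurable f') :
    AreaFormulaOn μ f (fun x => ENNReal.ofReal |(f' x).det|) s := by
  set Z := {x | (f' x).det = 0}
  have hZ : MeasurableSet Z :=
    measurableSet_eq_fun (ContinuousLinearMap.continuous_det.measurable.comp hf'_meas)
      measurable_const
  have hr : ∀ A : E →L[ℝ] E, ∃ r : ℝ≥0, r ≠ 0 ∧
      (A.det ≠ 0 → ∀ g t, ApproximatesLinearOn g A t r → InjOn g t) := fun A => by
    by_cases hA : A.det = 0
    · exact ⟨1, one_ne_zero, fun h => (h hA).elim⟩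
    · obtain ⟨r, hr, hinj⟩ := A.exists_ne_zero_injOn_of_approximatesLinearOn hA
      exact ⟨r, hr, fun _ => hinj⟩
  choose r hr hr_inj using hr
  obtain ⟨t, B, ht_disj, ht, hst, hB, hB_mem⟩ :=
    exists_partition_approximatesLinearOn_of_hasFDerivWithinAt f (s \ Z) f'
      (fun x hx => (hf' x hx.1).mono sdiff_subset) r hr
  have hinj : ∀ k, InjOn f (s \ Z ∩ t k) := fun k => by
    rcases (s \ Z).eq_empty_or_nonempty with h | h
    · simp [h]
    · obtain ⟨y, hy, hBy⟩ := hB_mem h k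
      exact hr_inj _ (hBy ▸ hy.2) f _ (hB k)
  have hsZ : AreaFormulaOn μ f (fun x => ENNReal.ofReal |(f' x).det|) (s \ Z) := by
    rw [← inter_eq_left.2 hst, inter_iUnion]
    refine iUnion (fun k => (hs.diff hZ).inter (ht k))
      (ht_disj.mono fun i j h => h.mono inter_subset_right inter_subset_right) fun k => ?_
    exact of_injOn ((hs.diff hZ).inter (ht k))
      (fun x hx => (hf' x hx.1.1).mono (inter_subset_left.trans sdiff_subset)) (hinj k)
  have hsZ' : AreaFormulaOn μ f (fun x => ENNReal.ofReal |(f' x).det|) (s ∩ Z) :=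
    of_det_eq_zero (hs.inter hZ) (fun x hx => (hf' x hx.1).mono inter_subset_left)
      fun x hx => hx.2
  rw [← inter_union_sdiff s Z]
  exact hsZ'.union hsZ (hs.inter hZ) (hs.diff hZ) disjoint_sdiff_inter.symm

lemma iUnion_of_eqOn_fderiv {g : ℕ → E → E} {C : ℕ → Set E} {D : E → E →L[ℝ] E}
    (hC : ∀ k, MeasurableSet (C k)) (hC_disj : Pairwise (Disjoint on C))
    (hfg : ∀ k, EqOn f (g k) (C k)) (hg : ∀ k, ∀ x ∈ C k, DifferentiableAt ℝ (g k) x)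
    (hD : ∀ k, EqOn D (fderiv ℝ (g k)) (C k)) :
    AreaFormulaOn μ f (fun x => ENNReal.ofReal |(D x).det|) (⋃ k, C k) := by
  refine iUnion hC hC_disj fun k => (of_hasFDerivWithinAt (hC k) (fun x hx => ?_)
    (measurable_fderiv ℝ (g k))).congr (hC k) fun x hx => by rw [hD k hx]
  exact (hg k x hx).hasFDerivAt.hasFDerivWithinAt.congr (hfg k) (hfg k hx)

end AreaFormulaOn

lemma Matrix.det_toEuclideanLin_symm {𝕜 ι : Type*} [RCLike 𝕜] [Fintype ι] [DecidableEq ι]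
    (T : EuclideanSpace 𝕜 ι →ₗ[𝕜] EuclideanSpace 𝕜 ι) :
    (Matrix.toEuclideanLin.symm T).det = LinearMap.det T := by
  rw [← LinearMap.det_toLpLin 2]
  exact congrArg _ (Matrix.toEuclideanLin.apply_symm_apply T)

lemma Matrix.toEuclideanLin_symm_apply {𝕜 ι : Type*} [RCLike 𝕜] [Fintype ι] [DecidableEq ι]
    (T : EuclideanSpace 𝕜 ι →ₗ[𝕜] EuclideanSpace 𝕜 ι) (i j : ι) :
    Matrix.toEuclideanLin.symm T i j = T (EuclideanSpace.single j 1) i := by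
  simp [Matrix.toLpLin_eq_toLin, LinearMap.toMatrix_apply]

/-- Area formula for a.e. approximately differentiable mappings `ℝⁿ → ℝⁿ`. -/
theorem area_formula_of_approx_differentiable {n : ℕ}
    (E : Set (EuclideanSpace ℝ (Fin n))) (hE : MeasurableSet E)
    (f : EuclideanSpace ℝ (Fin n) → EuclideanSpace ℝ (Fin n))
    (hf : Measurable (fun x : E => f x))
    (hap : ∀ᵐ a ∂volume, a ∈ E →
      ∃ L : EuclideanSpace ℝ (Fin n) →ₗ[ℝ] EuclideanSpace ℝ (Fin n),
        IsApproxDifferential E f a L) :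
    ∃ Z ⊆ E, volume Z = 0 ∧
      ∃ L : EuclideanSpace ℝ (Fin n) → Matrix (Fin n) (Fin n) ℝ,
        (∀ i j, Measurable fun x => L x i j) ∧
        (∀ x ∈ E \ Z, IsApproxDifferential E f x (Matrix.toEuclideanLin (L x))) ∧
        ∀ u : EuclideanSpace ℝ (Fin n) → ℝ≥0∞, Measurable u →
          ∫⁻ x in E, u x * ENNReal.ofReal |(L x).det| ∂volume
            = ∫⁻ y, (∑' x : ↥(f ⁻¹' {y} ∩ (E \ Z)), u ↑x) ∂volume := by
  obtain ⟨g, hg, hfg⟩ := exists_seq_lipschitzWith_of_ae_mem_lipschitzDensitySet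
    (ae_exists_mem_lipschitzDensitySet hE hap (by simp [ENNReal.mul_eq_top]))
  obtain ⟨C, hC, hC_disj, hCE, hC_null, hfgC, hgC⟩ :=
    exists_pieces_of_ae_exists_eq_lipschitzWith hE hf hg hfg
  obtain ⟨D, hD_meas, hD⟩ := exists_measurable_piecewise C hC (fun k => fderiv ℝ (g k))
    (fun k => measurable_fderiv ℝ (g k)) fun i j hij x hx =>
      ((hC_disj hij).ne_of_mem hx.1 hx.2 rfl).elim
  have hEC : E \ (E \ ⋃ k, C k) = ⋃ k, C k := sdiff_sdiff_cancel_left (iUnion_subset hCE)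
  refine ⟨E \ ⋃ k, C k, sdiff_subset, hC_null, fun x => Matrix.toEuclideanLin.symm (D x),
    fun i j => ?_, fun x hx => ?_, fun u hu => ?_⟩
  · simp only [Matrix.toEuclideanLin_symm_apply]
    exact (EuclideanSpace.proj i).measurable.comp (hD_meas.apply_continuousLinearMap _)
  · obtain ⟨k, hk⟩ := mem_iUnion.1 (hEC ▸ hx)
    rw [LinearEquiv.apply_symm_apply, hD k hk]
    exact isApproxDifferential_of_eqOn_of_hasFDerivAt (hfgC k) hk (hgC k x hk).1.hasFDerivAt
      (hgC k x hk).2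
  · simp only [Matrix.det_toEuclideanLin_symm]
    rw [hEC, ← (AreaFormulaOn.iUnion_of_eqOn_fderiv hC hC_disj hfgC (fun k x hx => (hgC k x hx).1)
      hD u hu).2]
    exact setLIntegral_congr (ae_eq_set.2 ⟨hC_null, by simp [sdiff_eq_empty.2 (iUnion_subset hCE)]⟩)
end
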